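/- arXiv:1603.04051 — 9 statements merged into one kernel-verified Lean document; each statement's English description precedes it below -/
import Mathlib

section
/- Let p be a prime and n ≥ 1. If ξ₁, ..., ξ_t are p^n-th roots of unity (with repetition allowed) whose sum is zero, and ξ is an element among them of maximal multiplicative order p^a, then all of ξ, ξ^(p^(a-1)+1), ξ^(2p^(a-1)+1), ..., ξ^((p-1)p^(a-1)+1) occur among ξ₁, ..., ξ_t. -/
open Polynomial Finset

/-- If `ξ₁, …, ξ_t` are `p^n`-th roots of unity summing to zero
and `ξ i₀` has maximal order `p^a` among them, then every
`(ξ i₀)^(k·p^(a-1)+1)` for `0 ≤ k ≤ p-1` occurs among the `ξ i`. -/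
theorem stmt0 (p : ℕ) (hp : p.Prime) (n : ℕ) (hn : 1 ≤ n) (t : ℕ)
    (ξ : Fin t → ℂ) (hroot : ∀ i, ξ i ^ p ^ n = 1) (hsum : ∑ i, ξ i = 0)
    (i₀ : Fin t) (a : ℕ) (hprim : IsPrimitiveRoot (ξ i₀) (p ^ a))
    (hmax : ∀ i, ξ i ^ p ^ a = 1) :
    ∀ k < p, ∃ i, ξ i = (ξ i₀) ^ (k * p ^ (a - 1) + 1) := by
  intro k hk
  have ht : 0 < t := i₀.pos
  have hp2 := hp.two_le
  rcases Nat.eq_zero_or_pos a with ha0 | ha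
  · exfalso
    have h1 : ∀ i, ξ i = 1 := by
      intro i; have := hmax i; simpa [ha0] using this
    have : (t : ℂ) = 0 := by simpa [h1] using hsum
    exact absurd (by exact_mod_cast this) ht.ne'
  set q : ℕ := p ^ (a - 1) with hqdef
  have hq : 0 < q := pow_pos hp.pos _
  have hNq : p ^ a = q * p := by rw [hqdef, ← pow_succ, Nat.sub_add_cancel ha]
  have hN1 : 1 < p ^ a := Nat.one_lt_pow ha.ne' hp.one_lt
  set ζ : ℂ := ξ i₀ with hζ
  have : NeZero (p ^ a) := ⟨(pow_pos hp.pos a).ne'⟩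
  have hm : ∀ i : Fin t, ∃ e < p ^ a, ζ ^ e = ξ i := fun i =>
    hprim.eq_pow_of_pow_eq_one (hmax i)
  choose m hmlt hmeq using hm
  have hm0 : m i₀ = 1 := hprim.pow_inj (hmlt i₀) hN1 (by rw [hmeq i₀, pow_one])
  set F : ℚ[X] := ∑ i : Fin t, X ^ m i with hF
  have hcoeff : ∀ e, F.coeff e = ∑ i : Fin t, if m i = e then (1 : ℚ) else 0 := by
    intro e
    rw [hF, finset_sum_coeff]
    exact Finset.sum_congr rfl fun i _ => by rw [coeff_X_pow]; simp [eq_comm]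
  have hFne : F ≠ 0 := by
    intro h0
    have : F.eval 1 = 0 := by rw [h0, eval_zero]
    rw [hF, eval_finset_sum] at this
    simp only [eval_pow, eval_X, one_pow, Finset.sum_const, card_univ, Fintype.card_fin,
      nsmul_eq_mul, mul_one] at this
    exact absurd (by exact_mod_cast this) ht.ne'
  have haev : aeval ζ F = 0 := by
    rw [hF, map_sum]
    simp only [map_pow, aeval_X]
    rw [← hsum]
    exact Finset.sum_congr rfl fun i _ => by rw [hmeq i]
  have hcyc : cyclotomic (p ^ a) ℚ = minpoly ℚ ζ :=
    cyclotomic_eq_minpoly_rat hprim (pow_pos hp.pos a)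
  have hdvd : cyclotomic (p ^ a) ℚ ∣ F := hcyc ▸ minpoly.dvd ℚ ζ haev
  obtain ⟨G, hFG⟩ := hdvd
  have hΦ : cyclotomic (p ^ a) ℚ = ∑ j ∈ Finset.range p, (X ^ q : ℚ[X]) ^ j := by
    have := cyclotomic_prime_pow_eq_geom_sum (R := ℚ) (n := a - 1) hp
    rwa [Nat.sub_add_cancel ha] at this
  have hdegF : F.natDegree < p ^ a := by
    rw [hF]
    have : (∑ i : Fin t, (X : ℚ[X]) ^ m i).natDegree ≤ p ^ a - 1 := by
      apply natDegree_sum_le_of_forall_le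
      intro i _
      calc (X ^ m i : ℚ[X]).natDegree ≤ m i := natDegree_X_pow_le _
        _ ≤ p ^ a - 1 := by have := hmlt i; omega
    omega
  have hGne : G ≠ 0 := by rintro rfl; rw [mul_zero] at hFG; exact hFne hFG
  have hdegG : G.natDegree < q := by
    have hΦne : cyclotomic (p ^ a) ℚ ≠ 0 := cyclotomic_ne_zero _ ℚ
    have hdm : F.natDegree = (cyclotomic (p ^ a) ℚ).natDegree + G.natDegree := by
      rw [hFG, natDegree_mul hΦne hGne]
    have hdΦ : (cyclotomic (p ^ a) ℚ).natDegree = q * p - q := by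
      rw [natDegree_cyclotomic, Nat.totient_prime_pow hp ha, ← hqdef, Nat.mul_sub, Nat.mul_one,
        Nat.mul_comm]
    rw [hNq] at hdegF
    omega
  have hkey : ∀ e < p ^ a, F.coeff e = G.coeff (e % q) := by
    intro e he
    have hmod : q * (e / q) + e % q = e := Nat.div_add_mod e q
    have hr : e % q < q := Nat.mod_lt _ hq
    rw [hFG, hΦ, Finset.sum_mul, finset_sum_coeff]
    have hterm : ∀ j ∈ Finset.range p, ((X ^ q : ℚ[X]) ^ j * G).coeff e =
        if j = e / q then G.coeff (e % q) else 0 := by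
      intro j _
      rw [← pow_mul, coeff_X_pow_mul']
      rcases eq_or_ne j (e / q) with rfl | hne
      · rw [if_pos (by omega), if_pos rfl]
        congr 1
        omega
      · rw [if_neg hne]
        rcases lt_or_gt_of_ne hne with hlt | hgt
        · have h2 : q * j + q ≤ q * (e / q) := by
            have := Nat.mul_le_mul_left q hlt
            rwa [Nat.mul_succ] at this
          rw [if_pos (by omega)]
          exact coeff_eq_zero_of_natDegree_lt (by omega)
        · have h2 : q * (e / q) + q ≤ q * j := by
            have := Nat.mul_le_mul_left q hgt
            rwa [Nat.mul_succ] at this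
          rw [if_neg (by omega)]
    rw [Finset.sum_congr rfl hterm,
      Finset.sum_ite_eq' (Finset.range p) (e / q) (fun _ => G.coeff (e % q)),
      if_pos (Finset.mem_range.mpr (Nat.div_lt_of_lt_mul (hNq ▸ he)))]
  have hek : (k * q + 1) % p ^ a < p ^ a := Nat.mod_lt _ (pow_pos hp.pos a)
  have hcoe : F.coeff ((k * q + 1) % p ^ a) = F.coeff 1 := by
    rw [hkey _ hek, hkey 1 hN1, Nat.mod_mod_of_dvd _ ⟨p, hNq⟩, Nat.mul_add_mod']
  have hpos : (0 : ℚ) < F.coeff 1 := by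
    rw [hcoeff]
    apply Finset.sum_pos' (fun i _ => by positivity)
    exact ⟨i₀, Finset.mem_univ _, by rw [if_pos hm0]; norm_num⟩
  have hex : ∃ i, m i = (k * q + 1) % p ^ a := by
    by_contra hno
    push_neg at hno
    have h0 : F.coeff ((k * q + 1) % p ^ a) = 0 := by
      rw [hcoeff]
      exact Finset.sum_eq_zero fun i _ => if_neg (hno i)
    rw [hcoe] at h0
    exact hpos.ne' h0
  obtain ⟨i, hi⟩ := hex
  refine ⟨i, ?_⟩
  rw [← hmeq i, hi]
  conv_rhs => rw [← Nat.mod_add_div (k * q + 1) (p ^ a)]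
  rw [pow_add, pow_mul, hprim.pow_eq_one, one_pow, mul_one]
end

section
/- Let p be a prime and a ≥ 1. Suppose f(X) = Σ_{j=1}^r X^(b_j) with 1 = b₁ ≤ b₂ ≤ ... ≤ b_r ≤ p^a, is divisible by the cyclotomic polynomial Φ_{p^a}(X) in ℤ[X], and r is minimal among such representations (no proper nonempty subsum of the ξ^(b_j) at a primitive p^a-th root vanishes). Then f(X) = X·Φ_{p^a}(X). -/
open Polynomial

private lemma sum_range_mul_decomp {γ : Type*} [AddCommMonoid γ] (f : ℕ → γ) (m n : ℕ) :
    ∑ k ∈ Finset.range (m * n), f k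
      = ∑ e ∈ Finset.range m, ∑ c ∈ Finset.range n, f (e * n + c) := by
  induction m with
  | zero => simp
  | succ m ih =>
    rw [Nat.succ_mul, Finset.sum_range_add, ih, Finset.sum_range_succ]

private lemma indep_aux {M : ℕ} (hM : 0 < M) {ξ : ℂ} (hξ : IsPrimitiveRoot ξ M)
    (d : ℕ → ℤ) {D : ℕ} (hD : D ≤ M.totient)
    (h : ∑ k ∈ Finset.range D, (d k : ℂ) * ξ ^ k = 0) :
    ∀ k < D, d k = 0 := by
  set P : ℚ[X] := ∑ k ∈ Finset.range D, Polynomial.C ((d k : ℚ)) * X ^ k with hP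
  have hcoeff : ∀ m : ℕ, P.coeff m = if m < D then (d m : ℚ) else 0 := by
    intro m
    rw [hP, Polynomial.finset_sum_coeff]
    simp only [Polynomial.coeff_C_mul, Polynomial.coeff_X_pow, mul_ite, mul_one, mul_zero,
      Finset.sum_ite_eq, Finset.mem_range]
  have hdeg : P.degree < (Polynomial.cyclotomic M ℚ).degree := by
    rw [Polynomial.degree_cyclotomic]
    refine lt_of_lt_of_le ((Polynomial.degree_lt_iff_coeff_zero P D).mpr ?_) ?_
    · intro m hm
      rw [hcoeff m, if_neg (by omega)]
    · exact_mod_cast Nat.cast_le.mpr hD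
  have hval : Polynomial.aeval ξ P = 0 := by
    rw [hP]
    simp only [map_sum, map_mul, Polynomial.aeval_C, map_pow, Polynomial.aeval_X, map_intCast]
    exact h
  have hdvdP : Polynomial.cyclotomic M ℚ ∣ P :=
    (Polynomial.cyclotomic_eq_minpoly_rat hξ hM) ▸ minpoly.dvd ℚ ξ hval
  have hP0 : P = 0 := Polynomial.eq_zero_of_dvd_of_degree_lt hdvdP hdeg
  intro k hk
  have hc := hcoeff k
  rw [hP0, Polynomial.coeff_zero, if_pos hk] at hc
  exact_mod_cast hc.symm

/-- if `f = Σ_{j} X^{b j}` with `1 = b₀ ≤ b₁ ≤ ⋯ ≤ p^a` is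
divisible by `Φ_{p^a}` in `ℤ[X]` and no proper nonempty subsum of the
`ξ^{b j}` vanishes at a primitive `p^a`-th root of unity `ξ`,
then `f = X·Φ_{p^a}`. -/
theorem stmt2 (p : ℕ) (hp : p.Prime) (a : ℕ) (ha : 1 ≤ a) (r : ℕ) (hr : 0 < r)
    (b : Fin r → ℕ) (hmono : Monotone b) (hb1 : b ⟨0, hr⟩ = 1)
    (hble : ∀ j, b j ≤ p ^ a)
    (hdvd : Polynomial.cyclotomic (p ^ a) ℤ ∣ ∑ j : Fin r, (X : ℤ[X]) ^ (b j))
    (hmin : ∀ (ξ : ℂ), IsPrimitiveRoot ξ (p ^ a) →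
      ∀ S : Finset (Fin r), S.Nonempty → S ≠ Finset.univ →
        ∑ j ∈ S, ξ ^ (b j) ≠ 0) :
    ∑ j : Fin r, (X : ℤ[X]) ^ (b j) = X * Polynomial.cyclotomic (p ^ a) ℤ := by
  classical
  set N := p ^ (a - 1) with hNdef
  set M := p ^ a with hMdef
  have haa : a - 1 + 1 = a := Nat.succ_pred_eq_of_pos ha
  have hM : M = N * p := by rw [hMdef, hNdef, ← pow_succ, haa]
  have hNpos : 0 < N := pow_pos hp.pos _
  have hMpos : 0 < M := pow_pos hp.pos _
  have hppos : 0 < p := hp.pos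
  have hp1 : p - 1 + 1 = p := Nat.succ_pred_eq_of_pos hppos
  have hcyc : Polynomial.cyclotomic M ℤ = ∑ e ∈ Finset.range p, ((X : ℤ[X]) ^ N) ^ e := by
    rw [hMdef, ← haa]
    exact Polynomial.cyclotomic_prime_pow_eq_geom_sum hp
  -- the primitive root
  set ξ : ℂ := Complex.exp (2 * Real.pi * Complex.I / M) with hξdef
  have hξ : IsPrimitiveRoot ξ M := Complex.isPrimitiveRoot_exp M hMpos.ne'
  have hpow : ∀ t : ℕ, ξ ^ t = ξ ^ (t % M) := by
    intro t
    conv_lhs => rw [← Nat.div_add_mod t M]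
    rw [pow_add, pow_mul, hξ.pow_eq_one, one_pow, one_mul]
  -- step 1: the full sum vanishes at ξ
  have hroot : (Polynomial.aeval ξ) (Polynomial.cyclotomic M ℤ) = 0 := by
    rw [Polynomial.aeval_def, Polynomial.eval₂_eq_eval_map, Polynomial.map_cyclotomic]
    exact hξ.isRoot_cyclotomic hMpos
  have hsum : (∑ j : Fin r, ξ ^ (b j)) = 0 := by
    obtain ⟨q, hq⟩ := hdvd
    have h := congrArg (Polynomial.aeval ξ) hq
    rw [map_mul, hroot, zero_mul, map_sum] at h
    simpa using h
  -- ω and geometric sums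
  have hω : IsPrimitiveRoot (ξ ^ N) p := hξ.pow hMpos (by rw [hM, mul_comm])
  have hgeo : ∑ e ∈ Finset.range p, (ξ ^ N) ^ e = 0 := hω.geom_sum_eq_zero hp.one_lt
  have hgeoc : ∀ c : ℕ, ∑ e ∈ Finset.range p, ξ ^ (e * N + c) = 0 := by
    intro c
    have : ∀ e : ℕ, ξ ^ (e * N + c) = (ξ ^ N) ^ e * ξ ^ c := by
      intro e; rw [pow_add, mul_comm e N, pow_mul]
    rw [Finset.sum_congr rfl fun e _ => this e, ← Finset.sum_mul, hgeo, zero_mul]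
  -- counting function
  set T : ℕ → Finset (Fin r) := fun k => Finset.univ.filter (fun j => b j % M = k) with hTdef
  set n : ℕ → ℕ := fun k => (T k).card with hndef
  have hTsum : ∀ k : ℕ, ∑ j ∈ T k, ξ ^ (b j) = (n k : ℂ) * ξ ^ k := by
    intro k
    have : ∀ j ∈ T k, ξ ^ (b j) = ξ ^ k := by
      intro j hj
      rw [hpow, (Finset.mem_filter.mp hj).2]
    rw [Finset.sum_congr rfl this, Finset.sum_const, nsmul_eq_mul]
  have h1 : ∑ k ∈ Finset.range M, (n k : ℂ) * ξ ^ k = 0 := by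
    rw [Finset.sum_congr rfl fun k _ => (hTsum k).symm]
    rw [Finset.sum_fiberwise_of_maps_to (fun j _ => Finset.mem_range.mpr (Nat.mod_lt _ hMpos))]
    exact hsum
  -- reindex
  have h3 : ∑ e ∈ Finset.range p, ∑ c ∈ Finset.range N,
      (n (e * N + c) : ℂ) * ξ ^ (e * N + c) = 0 := by
    have h2 := h1
    rw [hM, show N * p = p * N from mul_comm N p,
      sum_range_mul_decomp (fun k => (n k : ℂ) * ξ ^ k) p N] at h2
    exact h2
  have hlast : ∀ c : ℕ, ∑ e ∈ Finset.range (p - 1), ξ ^ (e * N + c)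
      = - ξ ^ ((p - 1) * N + c) := by
    intro c
    have h := hgeoc c
    rw [← hp1, Finset.sum_range_succ] at h
    exact eq_neg_of_add_eq_zero_left h
  -- the key equality of counts
  have hkey : ∀ e < p, ∀ c < N, n (e * N + c) = n ((p - 1) * N + c) := by
    have htot : (p - 1) * N ≤ M.totient := by
      rw [hMdef, Nat.totient_prime_pow hp (by omega : 0 < a), mul_comm, ← hNdef]
    set d : ℕ → ℤ := fun k => (n k : ℤ) - (n ((p - 1) * N + k % N) : ℤ) with hddef
    have hmod : ∀ e c : ℕ, c < N →
        d (e * N + c) = (n (e * N + c) : ℤ) - (n ((p - 1) * N + c) : ℤ) := by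
      intro e c hc
      rw [hddef]
      simp only
      rw [Nat.mul_add_mod', Nat.mod_eq_of_lt hc]
    have hd0 : ∑ k ∈ Finset.range ((p - 1) * N), (d k : ℂ) * ξ ^ k = 0 := by
      rw [sum_range_mul_decomp (fun k => (d k : ℂ) * ξ ^ k) (p - 1) N]
      set T0 : ℂ := ∑ c ∈ Finset.range N,
        (n ((p - 1) * N + c) : ℂ) * ξ ^ ((p - 1) * N + c) with hT0def
    -- A-part
      have hA : ∑ e ∈ Finset.range (p - 1), ∑ c ∈ Finset.range N,
          (n (e * N + c) : ℂ) * ξ ^ (e * N + c) = - T0 := by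
        have h := h3
        rw [← hp1, Finset.sum_range_succ] at h
        exact eq_neg_of_add_eq_zero_left h
      have hB : ∑ e ∈ Finset.range (p - 1), ∑ c ∈ Finset.range N,
          (n ((p - 1) * N + c) : ℂ) * ξ ^ (e * N + c) = - T0 := by
        rw [Finset.sum_comm, hT0def, ← Finset.sum_neg_distrib]
        refine Finset.sum_congr rfl fun c _ => ?_
        rw [← Finset.mul_sum, hlast c, mul_neg]
      calc ∑ e ∈ Finset.range (p - 1), ∑ c ∈ Finset.range N,
            (d (e * N + c) : ℂ) * ξ ^ (e * N + c)
          = ∑ e ∈ Finset.range (p - 1), ∑ c ∈ Finset.range N,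
              ((n (e * N + c) : ℂ) * ξ ^ (e * N + c)
                - (n ((p - 1) * N + c) : ℂ) * ξ ^ (e * N + c)) := by
            refine Finset.sum_congr rfl fun e _ => Finset.sum_congr rfl fun c hc => ?_
            rw [hmod e c (Finset.mem_range.mp hc)]
            push_cast
            ring
        _ = (∑ e ∈ Finset.range (p - 1), ∑ c ∈ Finset.range N,
              (n (e * N + c) : ℂ) * ξ ^ (e * N + c))
            - ∑ e ∈ Finset.range (p - 1), ∑ c ∈ Finset.range N,
              (n ((p - 1) * N + c) : ℂ) * ξ ^ (e * N + c) := by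
            simp only [Finset.sum_sub_distrib]
        _ = (- T0) - (- T0) := by rw [hA, hB]
        _ = 0 := by ring
    have hd := indep_aux hMpos hξ d htot hd0
    intro e he c hc
    rcases Nat.lt_or_ge e (p - 1) with h|h
    · have hk : e * N + c < (p - 1) * N := by
        calc e * N + c < (e + 1) * N := by rw [Nat.succ_mul]; omega
        _ ≤ (p - 1) * N := Nat.mul_le_mul_right _ (by omega)
      have h0 := hd _ hk
      rw [hmod e c hc] at h0
      omega
    · have he' : e = p - 1 := by omega
      rw [he']
  -- step 4: slices vanish
  set g : Fin r → ℕ := fun j => (b j % M) / N with hgdef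
  have hglt : ∀ j, g j < p := by
    intro j
    rw [hgdef]
    simp only
    rw [Nat.div_lt_iff_lt_mul hNpos]
    calc b j % M < M := Nat.mod_lt _ hMpos
    _ = p * N := by rw [hM, mul_comm]
  have hgmod : ∀ j, b j % M = g j * N + b j % N := by
    intro j
    have h1' : b j % M % N = b j % N := Nat.mod_mod_of_dvd _ ⟨p, hM⟩
    conv_lhs => rw [← Nat.div_add_mod (b j % M) N]
    rw [h1', mul_comm]
  have hslice : ∀ c < N, ∑ j ∈ Finset.univ.filter (fun j => b j % N = c), ξ ^ (b j) = 0 := by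
    intro c hc
    rw [← Finset.sum_fiberwise_of_maps_to
      (fun j _ => Finset.mem_range.mpr (hglt j)) (fun j => ξ ^ (b j))]
    have hfe : ∀ e ∈ Finset.range p,
        (Finset.univ.filter (fun j => b j % N = c)).filter (fun j => g j = e)
          = T (e * N + c) := by
      intro e _
      ext j
      simp only [Finset.mem_filter, Finset.mem_univ, true_and, hTdef]
      constructor
      · rintro ⟨hjc, hje⟩
        rw [hgmod j, hjc, hje]
      · intro hj
        have hmodc : b j % N = c := by
          have := Nat.mod_mod_of_dvd (b j) (⟨p, hM⟩ : N ∣ M)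
          rw [hj, Nat.mul_add_mod', Nat.mod_eq_of_lt hc] at this
          exact this.symm
        refine ⟨hmodc, ?_⟩
        have := hgmod j
        rw [hj, hmodc] at this
        exact (Nat.eq_of_mul_eq_mul_right hNpos (by omega : g j * N = e * N))
    rw [Finset.sum_congr rfl fun e he => by rw [hfe e he, hTsum]]
    rw [Finset.sum_congr rfl fun e he =>
      by rw [hkey e (Finset.mem_range.mp he) c hc]]
    rw [← Finset.mul_sum, hgeoc c, mul_zero]
  -- step 5: all residues agree with 1
  have hres : ∀ j, b j % N = 1 % N := by
    have hc0 : 1 % N < N := Nat.mod_lt _ hNpos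
    set S0 : Finset (Fin r) := Finset.univ.filter (fun j => b j % N = 1 % N) with hS0
    have h0mem : (⟨0, hr⟩ : Fin r) ∈ S0 := by
      rw [hS0]
      simp [hb1]
    have hSuniv : S0 = Finset.univ := by
      by_contra hne
      exact hmin ξ hξ S0 ⟨_, h0mem⟩ hne (hslice _ hc0)
    intro j
    have : j ∈ S0 := hSuniv ▸ Finset.mem_univ j
    rw [hS0] at this
    exact (Finset.mem_filter.mp this).2
  set c₀ : ℕ := 1 % N with hc₀def
  have hc0lt : c₀ < N := Nat.mod_lt _ hNpos
  have hfib : ∀ j, b j % M = g j * N + c₀ := by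
    intro j
    rw [hgmod j, hres j]
  -- fibers over `g`
  have hfibeq : ∀ e, Finset.univ.filter (fun j => g j = e) = T (e * N + c₀) := by
    intro e
    ext j
    simp only [Finset.mem_filter, Finset.mem_univ, true_and, hTdef]
    constructor
    · intro hje
      rw [hfib j, hje]
    · intro hj
      have := hfib j
      rw [hj] at this
      exact (Nat.eq_of_mul_eq_mul_right hNpos (by omega : e * N = g j * N)).symm
  have hcard : r = ∑ e ∈ Finset.range p, n (e * N + c₀) := by
    have := Finset.card_eq_sum_card_fiberwise
      (f := g) (s := Finset.univ) (t := Finset.range p)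
      (fun j _ => Finset.mem_range.mpr (hglt j))
    rw [Finset.card_univ, Fintype.card_fin] at this
    rw [this]
    exact Finset.sum_congr rfl fun e _ => by rw [hfibeq e]
  set lam : ℕ := n ((p - 1) * N + c₀) with hlamdef
  have hr_eq : r = p * lam := by
    rw [hcard, Finset.sum_congr rfl fun e he => hkey e (Finset.mem_range.mp he) c₀ hc0lt,
      Finset.sum_const, Finset.card_range, smul_eq_mul]
  have hlampos : 0 < lam := by
    rcases Nat.eq_zero_or_pos lam with h0 | h
    · rw [h0, mul_zero] at hr_eq
      omega
    · exact h
  have hTne : ∀ e < p, (T (e * N + c₀)).Nonempty := by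
    intro e he
    have h2 : (T (e * N + c₀)).card = lam := by
      rw [hlamdef]
      exact hkey e he c₀ hc0lt
    rw [← Finset.card_pos, h2]
    exact hlampos
  have hlam1 : lam = 1 := by
    by_contra hlam2'
    have hlam2 : 2 ≤ lam := by omega
    set pick : ℕ → Fin r := fun e => if h : e < p then (hTne e h).choose else ⟨0, hr⟩
      with hpickdef
    have hpickmem : ∀ e < p, pick e ∈ T (e * N + c₀) := by
      intro e he
      rw [hpickdef]
      simp only [dif_pos he]
      exact (hTne e he).choose_spec
    have hpickb : ∀ e < p, b (pick e) % M = e * N + c₀ := by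
      intro e he
      have := hpickmem e he
      rw [hTdef] at this
      exact (Finset.mem_filter.mp this).2
    have hinj : ∀ e ∈ Finset.range p, ∀ e' ∈ Finset.range p,
        pick e = pick e' → e = e' := by
      intro e he e' he' hpe
      have h1' := hpickb e (Finset.mem_range.mp he)
      have h2' := hpickb e' (Finset.mem_range.mp he')
      rw [hpe] at h1'
      have : e * N = e' * N := by omega
      exact Nat.eq_of_mul_eq_mul_right hNpos this
    set S : Finset (Fin r) := (Finset.range p).image pick with hSdef
    have hScard : S.card = p := by
      rw [hSdef, Finset.card_image_of_injOn hinj, Finset.card_range]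
    have hSne : S.Nonempty := by
      rw [← Finset.card_pos, hScard]
      exact hppos
    have hSneq : S ≠ Finset.univ := by
      intro hcontra
      have hpr : p = r := by
        rw [← hScard, hcontra, Finset.card_univ, Fintype.card_fin]
      have hpl : p * 1 = p * lam := by rw [mul_one]; exact hpr.trans hr_eq
      have := Nat.eq_of_mul_eq_mul_left hppos hpl
      omega
    have hSsum : ∑ j ∈ S, ξ ^ (b j) = 0 := by
      rw [hSdef, Finset.sum_image hinj]
      calc ∑ e ∈ Finset.range p, ξ ^ (b (pick e))
          = ∑ e ∈ Finset.range p, ξ ^ (e * N + c₀) := by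
            refine Finset.sum_congr rfl fun e he => ?_
            rw [hpow, hpickb e (Finset.mem_range.mp he)]
        _ = 0 := hgeoc c₀
    exact hmin ξ hξ S hSne hSneq hSsum
  have hrp : r = p := by rw [hr_eq, hlam1, mul_one]
  -- step 7 : identify exponents
  have hble1 : ∀ j, 1 ≤ b j := by
    intro j
    have : b ⟨0, hr⟩ ≤ b j := hmono (by exact Fin.mk_le_of_le_val (Nat.zero_le _))
    omega
  have hdvdN : ∀ j, N ∣ b j - 1 := by
    intro j
    exact (Nat.modEq_iff_dvd' (hble1 j)).mp ((hres j).symm)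
  set ee : Fin r → ℕ := fun j => (b j - 1) / N with heedef
  have hbe : ∀ j, b j = 1 + ee j * N := by
    intro j
    have h2' := Nat.div_mul_cancel (hdvdN j)
    have h1' := hble1 j
    rw [heedef]
    simp only
    omega
  have helt : ∀ j, ee j < p := by
    intro j
    rw [heedef]
    simp only
    rw [Nat.div_lt_iff_lt_mul hNpos]
    have h1' := hble j
    have h2' := hble1 j
    have : M = p * N := by rw [hM, mul_comm]
    omega
  have hbinj : ∀ j j' : Fin r, b j = b j' → j = j' := by
    intro j j' hjj
    have hj : j ∈ T (g j * N + c₀) := by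
      rw [hTdef]
      simp only [Finset.mem_filter, Finset.mem_univ, true_and]
      exact hfib j
    have hj' : j' ∈ T (g j * N + c₀) := by
      rw [hTdef]
      simp only [Finset.mem_filter, Finset.mem_univ, true_and]
      rw [← hjj]
      exact hfib j
    have hcard1 : n (g j * N + c₀) = 1 := by
      rw [hkey (g j) (hglt j) c₀ hc0lt, ← hlamdef, hlam1]
    obtain ⟨x, hx⟩ := Finset.card_eq_one.mp hcard1
    rw [hx, Finset.mem_singleton] at hj hj'
    rw [hj, hj']
  -- final computation
  rw [hcyc, Finset.mul_sum]
  have hterm : ∀ i : ℕ, (X : ℤ[X]) * (X ^ N) ^ i = X ^ (1 + i * N) := by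
    intro i
    rw [← pow_mul, show 1 + i * N = N * i + 1 by ring, pow_succ, mul_comm]
  rw [Finset.sum_congr rfl fun i _ => hterm i]
  refine Finset.sum_bij (fun j _ => ee j) (fun j _ => Finset.mem_range.mpr (helt j))
    ?_ ?_ ?_
  · intro j hj j' hj' hee
    have hee' : ee j = ee j' := hee
    apply hbinj
    rw [hbe j, hbe j', hee']
  · have := Finset.surj_on_of_inj_on_of_card_le
      (s := (Finset.univ : Finset (Fin r))) (t := Finset.range p)
      (fun j _ => ee j) (fun j _ => Finset.mem_range.mpr (helt j))
      (fun j j' hj hj' hee => by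
        have hee' : ee j = ee j' := hee
        apply hbinj
        rw [hbe j, hbe j', hee'])
      (by rw [Finset.card_range, Finset.card_univ, Fintype.card_fin, hrp])
    intro e he
    obtain ⟨j, hj, hje⟩ := this e he
    exact ⟨j, hj, hje.symm⟩
  · intro j _
    rw [hbe j]
end

section
/- Any nonempty multiset of p^n-th roots of unity summing to zero can be partitioned into sub-multisets, each of which has the form {ξ, ξ^(p^(a-1)+1), ..., ξ^((p-1)p^(a-1)+1)} for some root ξ in the multiset of order p^a (for various a), and each of these sub-multisets sums to zero. In particular, the total number of elements t is divisible by p. -/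
open Polynomial



lemma coeff_expPoly (E : Multiset ℕ) (k : ℕ) :
    ((E.map (fun e => (X : ℤ[X]) ^ e)).sum).coeff k = E.count k := by
  induction E using Multiset.induction with
  | empty => simp
  | cons a s ih =>
    simp only [Multiset.map_cons, Multiset.sum_cons, coeff_add, ih, Multiset.count_cons,
      coeff_X_pow]
    split_ifs <;> simp_all <;> omega

lemma natDegree_expPoly_le (E : Multiset ℕ) (N : ℕ) (hE : ∀ e ∈ E, e < N) :
    ((E.map (fun e => (X : ℤ[X]) ^ e)).sum).natDegree ≤ N - 1 := by
  induction E using Multiset.induction with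
  | empty => simp
  | cons a s ih =>
    simp only [Multiset.map_cons, Multiset.sum_cons]
    refine (natDegree_add_le _ _).trans
      (max_le ?_ (ih fun e he => hE e (Multiset.mem_cons_of_mem he)))
    have := hE a (Multiset.mem_cons_self a s)
    simpa [natDegree_X_pow] using by omega

lemma key_count {p n : ℕ} (hp : p.Prime) (hn : 1 ≤ n) {ζ : ℂ} (hζ : IsPrimitiveRoot ζ (p ^ n))
    (E : Multiset ℕ) (hE : ∀ e ∈ E, e < p ^ n)
    (hsum : (E.map (fun e => ζ ^ e)).sum = 0) :
    ∀ r < p ^ (n - 1), ∀ q < p, E.count (r + q * p ^ (n - 1)) = E.count r := by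
  intro r hr q hq
  rcases eq_or_ne E 0 with rfl | hne
  · simp
  -- setup
  set P : ℕ := p ^ (n - 1) with hP
  have hPpos : 0 < P := pow_pos hp.pos _
  have hPn : p ^ n = P * p := by
    rw [hP, ← pow_succ]
    congr 1
    omega
  have hpos : 0 < p ^ n := pow_pos hp.pos _
  set f : ℤ[X] := (E.map (fun e => (X : ℤ[X]) ^ e)).sum with hf
  have hcoeff : ∀ k, f.coeff k = E.count k := fun k => coeff_expPoly E k
  have haeval : aeval ζ f = 0 := by
    rw [hf, map_multiset_sum, Multiset.map_map]
    rw [show ((aeval ζ) ∘ fun e => (X : ℤ[X]) ^ e) = fun e : ℕ => ζ ^ e by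
      funext e; simp]
    exact hsum
  have hfne : f ≠ 0 := by
    obtain ⟨e1, he1⟩ := Multiset.exists_mem_of_ne_zero hne
    intro h
    have := hcoeff e1
    rw [h] at this
    simp only [coeff_zero] at this
    have : E.count e1 = 0 := by exact_mod_cast this.symm
    rw [Multiset.count_eq_zero] at this
    exact this he1
  -- divisibility by the cyclotomic polynomial
  have hdvd : cyclotomic (p ^ n) ℤ ∣ f := by
    rw [cyclotomic_eq_minpoly hζ hpos]
    exact minpoly.isIntegrallyClosed_dvd (hζ.isIntegral hpos) haeval
  obtain ⟨g, hg⟩ := hdvd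
  have hcyc : cyclotomic (p ^ n) ℤ = ∑ i ∈ Finset.range p, (X : ℤ[X]) ^ (P * i) := by
    have h1 : n = (n - 1) + 1 := by omega
    conv_lhs => rw [h1]
    rw [cyclotomic_prime_pow_eq_geom_sum hp]
    refine Finset.sum_congr rfl fun i _ => ?_
    rw [← pow_mul, ← hP]
  -- degree bound on g
  have hgne : g ≠ 0 := by rintro rfl; rw [mul_zero] at hg; exact hfne hg
  have hcycne : cyclotomic (p ^ n) ℤ ≠ 0 := (cyclotomic.monic _ ℤ).ne_zero
  have hdegf : f.natDegree ≤ p ^ n - 1 := natDegree_expPoly_le E _ hE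
  have hdegcyc : (cyclotomic (p ^ n) ℤ).natDegree = P * (p - 1) := by
    rw [natDegree_cyclotomic, Nat.totient_prime_pow hp (by omega : 0 < n)]
  have hdegg : g.natDegree < P := by
    have hmul := natDegree_mul hcycne hgne
    rw [← hg, hdegcyc] at hmul
    rw [hPn] at hdegf
    have hps : P * p = P * (p - 1) + P := by
      have h2 : p = (p - 1) + 1 := by omega
      calc P * p = P * ((p - 1) + 1) := by rw [← h2]
        _ = P * (p - 1) + P := by ring
    omega
  have hgcoeff : ∀ s, P ≤ s → g.coeff s = 0 := fun s hs =>
    coeff_eq_zero_of_natDegree_lt (lt_of_lt_of_le hdegg hs)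
  -- the coefficient of f at r + q' * P equals g.coeff r for every q' < p
  have hmain : ∀ q' < p, (E.count (r + q' * P) : ℤ) = g.coeff r := by
    intro q' hq'
    rw [← hcoeff, hg, hcyc, Finset.sum_mul, finset_sum_coeff]
    rw [Finset.sum_eq_single q']
    · rw [mul_comm ((X : ℤ[X]) ^ (P * q')) g, coeff_mul_X_pow']
      rw [if_pos (by rw [mul_comm]; omega)]
      congr 1
      rw [mul_comm P q']
      omega
    · intro i hi hine
      rw [mul_comm ((X : ℤ[X]) ^ (P * i)) g, coeff_mul_X_pow']
      rcases lt_or_gt_of_ne hine with h | h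
      · rw [if_pos (le_trans (Nat.mul_le_mul_left P (le_of_lt h)) (by rw [mul_comm]; omega))]
        apply hgcoeff
        have h1 : P * i + P ≤ P * q' := by
          calc P * i + P = P * (i + 1) := by ring
            _ ≤ P * q' := Nat.mul_le_mul_left P h
        rw [mul_comm q' P]
        omega
      · rw [if_neg]
        have h1 : P * q' + P ≤ P * i := by
          calc P * q' + P = P * (q' + 1) := by ring
            _ ≤ P * i := Nat.mul_le_mul_left P h
        rw [mul_comm q' P]
        omega
    · intro h
      exact absurd (Finset.mem_range.mpr hq') h
  have h1 := hmain q hq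
  have h2 := hmain 0 hp.pos
  rw [zero_mul, add_zero] at h2
  exact_mod_cast h1.trans h2.symm



lemma msum_range (p : ℕ) (f : ℕ → ℂ) :
    ((Multiset.range p).map f).sum = ∑ i ∈ Finset.range p, f i := by
  rw [Finset.sum_eq_multiset_sum, Finset.range_val]

lemma coset_nodup {p : ℕ} {ω u : ℂ} (hω : IsPrimitiveRoot ω p) (hu : u ≠ 0) :
    ((Multiset.range p).map (fun q => u * ω ^ q)).Nodup :=
  (Multiset.nodup_range p).map_on fun i hi j hj h =>
    hω.pow_inj (Multiset.mem_range.mp hi) (Multiset.mem_range.mp hj) (mul_left_cancel₀ hu h)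

lemma coset_mem {p : ℕ} (hp : 0 < p) {ω u : ℂ} (hω : IsPrimitiveRoot ω p) (hu : u ≠ 0)
    (z : ℂ) : z ∈ (Multiset.range p).map (fun q => u * ω ^ q) ↔ (z * u⁻¹) ^ p = 1 := by
  constructor
  · intro hz
    rw [Multiset.mem_map] at hz
    obtain ⟨q, _, rfl⟩ := hz
    rw [mul_comm u, mul_assoc, mul_inv_cancel₀ hu, mul_one, ← pow_mul, mul_comm q p, pow_mul,
      hω.pow_eq_one, one_pow]
  · intro hz
    have : NeZero p := ⟨hp.ne'⟩
    obtain ⟨q, hq, hzq⟩ := hω.eq_pow_of_pow_eq_one hz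
    rw [Multiset.mem_map]
    refine ⟨q, Multiset.mem_range.mpr hq, ?_⟩
    rw [hzq]
    field_simp

lemma coset_ext {p : ℕ} (hp : 0 < p) {ω₁ ω₂ u₁ u₂ : ℂ} (hω₁ : IsPrimitiveRoot ω₁ p)
    (hω₂ : IsPrimitiveRoot ω₂ p) (hu₁ : u₁ ≠ 0) (hu₂ : u₂ ≠ 0)
    (h : (u₂ * u₁⁻¹) ^ p = 1) :
    (Multiset.range p).map (fun q => u₁ * ω₁ ^ q) = (Multiset.range p).map (fun q => u₂ * ω₂ ^ q) := by
  rw [Multiset.Nodup.ext (coset_nodup hω₁ hu₁) (coset_nodup hω₂ hu₂)]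
  intro z
  rw [coset_mem hp hω₁ hu₁, coset_mem hp hω₂ hu₂]
  constructor
  · intro h1
    have : z * u₂⁻¹ = (z * u₁⁻¹) * (u₂ * u₁⁻¹)⁻¹ := by field_simp
    rw [this, mul_pow, h1, inv_pow, h, inv_one, one_mul]
  · intro h1
    have : z * u₁⁻¹ = (z * u₂⁻¹) * (u₂ * u₁⁻¹) := by field_simp
    rw [this, mul_pow, h1, h, one_mul]


lemma partition_lemma {p n : ℕ} (hp : p.Prime) (hn : 1 ≤ n) {ζ : ℂ}
    (hζ : IsPrimitiveRoot ζ (p ^ n)) :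
    ∀ M : Multiset ℂ, (∀ x ∈ M, x ^ p ^ n = 1) → M.sum = 0 →
    ∃ parts : Multiset (Multiset ℂ), parts.sum = M ∧
      ∀ S ∈ parts, ∃ r < p ^ (n - 1),
        S = (Multiset.range p).map fun q => ζ ^ (r + q * p ^ (n - 1)) := by
  intro M
  induction M using Multiset.strongInductionOn with
  | _ M ih =>
  intro hroot hsum
  rcases eq_or_ne M 0 with rfl | hMne
  · exact ⟨0, by simp, by simp⟩
  classical
  set P := p ^ (n - 1) with hP
  have hPpos : 0 < P := pow_pos hp.pos _
  have hPn : p ^ n = P * p := by rw [hP, ← pow_succ]; congr 1; omega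
  have hpos : 0 < p ^ n := pow_pos hp.pos _
  have hζne : ζ ≠ 0 := hζ.ne_zero hpos.ne'
  have : NeZero (p ^ n) := ⟨hpos.ne'⟩
  have hchoice : ∀ x ∈ M, ∃ e, e < p ^ n ∧ ζ ^ e = x := by
    intro x hx
    obtain ⟨e, he, hee⟩ := hζ.eq_pow_of_pow_eq_one (hroot x hx)
    exact ⟨e, he, hee⟩
  set gfun : ℂ → ℕ := fun x => if h : ∃ e, e < p ^ n ∧ ζ ^ e = x then h.choose else 0 with hgfun
  have hgspec : ∀ x ∈ M, gfun x < p ^ n ∧ ζ ^ gfun x = x := by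
    intro x hx
    have h := hchoice x hx
    rw [hgfun]
    simp only [dif_pos h]
    exact ⟨h.choose_spec.1, h.choose_spec.2⟩
  set E := M.map gfun with hE
  have hEM : E.map (fun e => ζ ^ e) = M := by
    rw [hE, Multiset.map_map]
    calc M.map (fun x => ζ ^ gfun x) = M.map id :=
          Multiset.map_congr rfl fun x hx => (hgspec x hx).2
      _ = M := Multiset.map_id M
  have hElt : ∀ e ∈ E, e < p ^ n := by
    intro e he
    rw [hE, Multiset.mem_map] at he
    obtain ⟨x, hx, rfl⟩ := he
    exact (hgspec x hx).1
  have hEsum : (E.map fun e => ζ ^ e).sum = 0 := by rw [hEM]; exact hsum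
  have hkey := key_count hp hn hζ E hElt hEsum
  obtain ⟨x0, hx0⟩ := Multiset.exists_mem_of_ne_zero hMne
  set e0 := gfun x0 with he0
  have he0E : e0 ∈ E := Multiset.mem_map_of_mem _ hx0
  have he0lt : e0 < p ^ n := hElt e0 he0E
  set r0 := e0 % P with hr0
  set q0 := e0 / P with hq0
  have hr0lt : r0 < P := Nat.mod_lt _ hPpos
  have hq0lt : q0 < p := by
    rw [hq0]
    apply Nat.div_lt_of_lt_mul
    rw [← hPn]
    exact he0lt
  have he0eq : e0 = r0 + q0 * P := by
    have := Nat.mod_add_div e0 P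
    rw [hr0, hq0, mul_comm]
    omega
  have hcount : ∀ q < p, 0 < E.count (r0 + q * P) := by
    intro q hq
    rw [hkey r0 hr0lt q hq, ← hkey r0 hr0lt q0 hq0lt, ← he0eq]
    exact Multiset.count_pos.mpr he0E
  have hωP : IsPrimitiveRoot (ζ ^ P) p := hζ.pow hpos hPn
  set c : Multiset ℂ := (Multiset.range p).map (fun q => ζ ^ (r0 + q * P)) with hc
  have hcmap : c = (Multiset.range p).map (fun q => ζ ^ r0 * (ζ ^ P) ^ q) := by
    rw [hc]
    apply Multiset.map_congr rfl
    intro q _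
    rw [pow_add, mul_comm q P, pow_mul]
  have hcM : c ≤ M := by
    rw [Multiset.le_iff_subset (by rw [hcmap]; exact coset_nodup hωP (pow_ne_zero _ hζne))]
    intro z hz
    rw [hc, Multiset.mem_map] at hz
    obtain ⟨q, hq, rfl⟩ := hz
    have hmem : r0 + q * P ∈ E := Multiset.count_pos.mp (hcount q (Multiset.mem_range.mp hq))
    rw [← hEM]
    exact Multiset.mem_map_of_mem _ hmem
  have hcsum : c.sum = 0 := by
    rw [hcmap, msum_range, ← Finset.mul_sum, hωP.geom_sum_eq_zero hp.one_lt, mul_zero]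
  have hccard : Multiset.card c = p := by rw [hc]; simp
  set M' := M - c with hM'
  have hM'add : M' + c = M := tsub_add_cancel_of_le hcM
  have hM'lt : M' < M := by
    refine lt_of_le_of_ne tsub_le_self fun h => ?_
    rw [h] at hM'add
    have hc0 : c = 0 := by
      have := left_eq_add.mp hM'add.symm
      exact this
    rw [hc0] at hccard
    simp at hccard
    exact hp.ne_zero hccard.symm
  have hroot' : ∀ x ∈ M', x ^ p ^ n = 1 := fun x hx =>
    hroot x (Multiset.mem_of_le tsub_le_self hx)
  have hsum' : M'.sum = 0 := by
    have h2 := congrArg Multiset.sum hM'add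
    rw [Multiset.sum_add, hcsum, add_zero, hsum] at h2
    exact h2
  obtain ⟨parts', hpsum, hpform⟩ := ih M' hM'lt hroot' hsum'
  refine ⟨c ::ₘ parts', ?_, ?_⟩
  · rw [Multiset.sum_cons, hpsum, ← hM'add, add_comm]
  · intro S hS
    rcases Multiset.mem_cons.mp hS with rfl | hS'
    · exact ⟨r0, hr0lt, hc⟩
    · exact hpform S hS'


lemma card_sum_parts (p : ℕ) (parts : Multiset (Multiset ℂ))
    (h : ∀ S ∈ parts, Multiset.card S = p) :
    Multiset.card parts.sum = Multiset.card parts * p := by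
  induction parts using Multiset.induction with
  | empty => simp
  | cons a s ih =>
    rw [Multiset.sum_cons, Multiset.card_add, Multiset.card_cons,
      h a (Multiset.mem_cons_self a s), ih fun S hS => h S (Multiset.mem_cons_of_mem hS)]
    ring

/-- a nonempty multiset of `p^n`-th roots of unity summing to zero
can be partitioned into sub-multisets of the form
`{ξ, ξ^(p^(a-1)+1), …, ξ^((p-1)p^(a-1)+1)}` for some `ξ` in the multiset of
order `p^a`, each summing to zero; in particular `p` divides the cardinality. -/
theorem stmt3 (p : ℕ) (hp : p.Prime) (n : ℕ) (hn : 1 ≤ n) (M : Multiset ℂ)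
    (hM : M ≠ 0) (hroot : ∀ x ∈ M, x ^ p ^ n = 1) (hsum : M.sum = 0) :
    (∃ parts : Multiset (Multiset ℂ), parts.sum = M ∧
      ∀ S ∈ parts, ∃ ξ ∈ M, ∃ a : ℕ, 1 ≤ a ∧ IsPrimitiveRoot ξ (p ^ a) ∧
        S = (Multiset.range p).map (fun k => ξ ^ (k * p ^ (a - 1) + 1)) ∧
        S.sum = 0) ∧
    p ∣ Multiset.card M := by
  have hpos : 0 < p ^ n := pow_pos hp.pos _
  obtain ⟨ζ, hζ⟩ : ∃ ζ : ℂ, IsPrimitiveRoot ζ (p ^ n) :=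
    ⟨_, Complex.isPrimitiveRoot_exp (p ^ n) hpos.ne'⟩
  have hζne : ζ ≠ 0 := hζ.ne_zero hpos.ne'
  set P := p ^ (n - 1) with hPdef
  have hPpos : 0 < P := pow_pos hp.pos _
  have hPn : p ^ n = P * p := by rw [hPdef, ← pow_succ]; congr 1; omega
  have hωP : IsPrimitiveRoot (ζ ^ P) p := hζ.pow hpos hPn
  obtain ⟨parts, hpsum, hpform⟩ := partition_lemma hp hn hζ M hroot hsum
  constructor
  · refine ⟨parts, hpsum, ?_⟩
    intro S hS
    obtain ⟨r, hr, hSeq⟩ := hpform S hS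
    have hSM : S ≤ M := hpsum ▸ Multiset.le_sum_of_mem hS
    have hu1 : (ζ : ℂ) ^ r ≠ 0 := pow_ne_zero _ hζne
    have hSmap : S = (Multiset.range p).map (fun q => ζ ^ r * (ζ ^ P) ^ q) := by
      rw [hSeq]
      exact Multiset.map_congr rfl fun q _ => by rw [pow_add, mul_comm q P, pow_mul]
    -- choose ξ ∈ S with ξ ≠ 1
    have hz0S : ζ ^ r * (ζ ^ P) ^ 0 ∈ S := by
      rw [hSmap]; exact Multiset.mem_map_of_mem _ (Multiset.mem_range.mpr hp.pos)
    have hz1S : ζ ^ r * (ζ ^ P) ^ 1 ∈ S := by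
      rw [hSmap]; exact Multiset.mem_map_of_mem _ (Multiset.mem_range.mpr hp.one_lt)
    have hξex : ∃ ξ ∈ S, ξ ≠ 1 := by
      by_cases h0 : ζ ^ r * (ζ ^ P) ^ 0 = 1
      · refine ⟨_, hz1S, fun h1 => ?_⟩
        have : (ζ ^ P) ^ 0 = (ζ ^ P) ^ 1 := by
          apply mul_left_cancel₀ hu1
          rw [h0, h1]
        exact absurd (hωP.pow_inj hp.pos hp.one_lt this) (by omega)
      · exact ⟨_, hz0S, h0⟩
    obtain ⟨ξ, hξS, hξne1⟩ := hξex
    have hξM : ξ ∈ M := Multiset.mem_of_le hSM hξS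
    have hξroot : ξ ^ p ^ n = 1 := hroot ξ hξM
    have hξne0 : ξ ≠ 0 := by
      rintro rfl
      rw [zero_pow hpos.ne'] at hξroot
      exact zero_ne_one hξroot
    obtain ⟨a, han, haord⟩ := (Nat.dvd_prime_pow hp).mp (orderOf_dvd_of_pow_eq_one hξroot)
    have ha1 : 1 ≤ a := by
      rcases Nat.eq_zero_or_pos a with rfl | h
      · rw [pow_zero] at haord
        exact absurd (orderOf_eq_one_iff.mp haord) hξne1
      · exact h
    have hprim : IsPrimitiveRoot ξ (p ^ a) := haord ▸ IsPrimitiveRoot.orderOf ξ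
    have hpa : p ^ a = p ^ (a - 1) * p := by rw [← pow_succ]; congr 1; omega
    have hη : IsPrimitiveRoot (ξ ^ p ^ (a - 1)) p := hprim.pow (pow_pos hp.pos _) hpa
    -- ξ is in the coset, so the two cosets agree
    have hcos : (ξ * (ζ ^ r)⁻¹) ^ p = 1 := by
      rw [← coset_mem hp.pos hωP hu1 ξ, ← hSmap]
      exact hξS
    have hST : S = (Multiset.range p).map (fun k => ξ ^ (k * p ^ (a - 1) + 1)) := by
      rw [hSmap, coset_ext hp.pos hωP hη hu1 hξne0 hcos]
      exact Multiset.map_congr rfl fun k _ => by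
        rw [← pow_mul, mul_comm (p ^ (a - 1)) k, pow_add, pow_one, mul_comm]
    refine ⟨ξ, hξM, a, ha1, hprim, hST, ?_⟩
    rw [hSmap, msum_range, ← Finset.mul_sum, hωP.geom_sum_eq_zero hp.one_lt, mul_zero]
  · rw [← hpsum, card_sum_parts p parts fun S hS => ?_]
    · exact dvd_mul_left p _
    · obtain ⟨r, _, hSeq⟩ := hpform S hS
      rw [hSeq, Multiset.card_map, Multiset.card_range]
end

section
/- Let G be a finite group with a nontrivial normal abelian subgroup A, p a prime, and P a Sylow p-subgroup of G. Then every element of A ∩ Z(P) is non-vanishing in G, i.e., χ(x) ≠ 0 for every irreducible complex character χ of G and every x ∈ A ∩ Z(P). -/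
open CategoryTheory Polynomial

/-- A finite-dimensional nontrivial commutative algebra over `ℂ` admits an
algebra homomorphism to `ℂ`. -/
lemma aux_algHom (B : Type) [CommRing B] [Algebra ℂ B] [Nontrivial B] [Module.Finite ℂ B] :
    Nonempty (B →ₐ[ℂ] ℂ) := by
  obtain ⟨m, hm⟩ := Ideal.exists_maximal B
  haveI := hm
  letI : Field (B ⧸ m) := Ideal.Quotient.field m
  haveI : Module.Finite ℂ (B ⧸ m) := Module.Finite.of_surjective
    (Ideal.Quotient.mkₐ ℂ m).toLinearMap (Ideal.Quotient.mk_surjective)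
  haveI : Algebra.IsIntegral ℂ (B ⧸ m) := Algebra.IsIntegral.of_finite ℂ _
  have hsurj : Function.Surjective (algebraMap ℂ (B ⧸ m)) :=
    IsAlgClosed.algebraMap_bijective_of_isIntegral.2
  have hinj : Function.Injective (algebraMap ℂ (B ⧸ m)) := (algebraMap ℂ (B ⧸ m)).injective
  let e : ℂ ≃ₐ[ℂ] (B ⧸ m) := AlgEquiv.ofBijective (Algebra.ofId ℂ (B ⧸ m)) ⟨hinj, hsurj⟩
  exact ⟨(e.symm.toAlgHom).comp (Ideal.Quotient.mkₐ ℂ m)⟩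

/-- A sum of `p`-power roots of unity whose number of terms is not divisible by `p`
is nonzero. -/
lemma aux_sum_ne_zero {p : ℕ} (hp : p.Prime) (k : ℕ) {ι : Type} (s : Finset ι)
    (μ : ι → ℂ) (hμ : ∀ i ∈ s, μ i ^ p ^ k = 1) (hcard : ¬ (p ∣ s.card)) :
    ∑ i ∈ s, μ i ≠ 0 := by
  classical
  intro h0
  rcases Nat.eq_zero_or_pos k with rfl | hk
  · simp only [pow_zero, pow_one] at hμ
    rw [Finset.sum_congr rfl hμ, Finset.sum_const, nsmul_eq_mul, mul_one, Nat.cast_eq_zero] at h0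
    exact hcard (h0 ▸ dvd_zero p)
  · set n := p ^ k with hn
    have hn0 : n ≠ 0 := pow_ne_zero _ hp.pos.ne'
    haveI : NeZero n := ⟨hn0⟩
    have hnpos : 0 < n := Nat.pos_of_ne_zero hn0
    obtain ⟨ζ, hζ⟩ : ∃ ζ : ℂ, IsPrimitiveRoot ζ n := ⟨_, Complex.isPrimitiveRoot_exp n hn0⟩
    have ha : ∀ i ∈ s, ∃ a : ℕ, ζ ^ a = μ i := by
      intro i hi
      obtain ⟨a, _, hae⟩ := hζ.eq_pow_of_pow_eq_one (hμ i hi)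
      exact ⟨a, hae⟩
    choose a hae using ha
    set f : ℤ[X] := ∑ i ∈ s.attach, X ^ (a i.1 i.2) with hf
    have hfe : aeval ζ f = 0 := by
      rw [hf, map_sum]
      have : ∀ i : {x // x ∈ s}, aeval ζ ((X : ℤ[X]) ^ (a i.1 i.2)) = μ i.1 := by
        intro i; rw [map_pow, aeval_X, hae i.1 i.2]
      rw [Finset.sum_congr rfl (fun i _ => this i), ← h0, Finset.sum_attach]
    have hdvd : minpoly ℤ ζ ∣ f := minpoly.isIntegrallyClosed_dvd (hζ.isIntegral hnpos) hfe
    rw [← Polynomial.cyclotomic_eq_minpoly hζ hnpos] at hdvd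
    obtain ⟨g, hg⟩ := hdvd
    have h1 : f.eval 1 = (s.card : ℤ) := by
      rw [hf, eval_finset_sum]
      simp [Finset.card_attach]
    obtain ⟨k', rfl⟩ := Nat.exists_eq_succ_of_ne_zero hk.ne'
    have h2 : (cyclotomic (p ^ (k' + 1)) ℤ).eval 1 = (p : ℤ) := by
      haveI : Fact p.Prime := ⟨hp⟩
      exact Polynomial.eval_one_cyclotomic_prime_pow k'
    have hdv : (s.card : ℤ) = (p : ℤ) * g.eval 1 := by
      rw [← h1, hg, eval_mul, h2]
    refine hcard (Int.ofNat_dvd.mp ?_)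
    exact ⟨g.eval 1, hdv⟩

set_option synthInstance.maxHeartbeats 1000000 in
set_option maxHeartbeats 1000000 in
/-- If a family of pairwise-commuting endomorphisms, each of `p`-power order, sums to a
scalar `c` and the number of terms is prime to `p`, then `c ≠ 0`. -/
lemma aux_scalar_ne_zero {M : Type} [AddCommGroup M] [Module ℂ M] [FiniteDimensional ℂ M]
    [Nontrivial M] {ι : Type} (t : Finset ι) (f : ι → Module.End ℂ M)
    (hcomm : ∀ i ∈ t, ∀ j ∈ t, f i * f j = f j * f i)
    {p : ℕ} (hp : p.Prime) (k : ℕ)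
    (hpow : ∀ i ∈ t, f i ^ p ^ k = 1)
    (hcard : ¬ p ∣ t.card)
    (c : ℂ) (hsum : ∑ i ∈ t, f i = c • 1) : c ≠ 0 := by
  classical
  have hEnd10 : (1 : Module.End ℂ M) ≠ 0 := by
    obtain ⟨v0, hv0⟩ := exists_ne (0 : M)
    intro h
    exact hv0 (by simpa using congrFun (congrArg DFunLike.coe h) v0)
  set s : Set (Module.End ℂ M) := f '' ↑t with hs
  have hscomm : ∀ a ∈ s, ∀ b ∈ s, a * b = b * a := by
    rintro a ⟨i, hi, rfl⟩ b ⟨j, hj, rfl⟩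
    exact hcomm i hi j hj
  letI : CommRing (Algebra.adjoin ℂ s) := Algebra.adjoinCommRingOfComm ℂ hscomm
  haveI : Nontrivial (Algebra.adjoin ℂ s) :=
    ⟨⟨1, 0, fun h => hEnd10 (by simpa using congrArg Subtype.val h)⟩⟩
  haveI : Module.Finite ℂ (Algebra.adjoin ℂ s) := by infer_instance
  obtain ⟨ψ⟩ := aux_algHom (Algebra.adjoin ℂ s)
  let u : {i // i ∈ t} → (Algebra.adjoin ℂ s) := fun i =>
    ⟨f i.1, Algebra.subset_adjoin ⟨i.1, i.2, rfl⟩⟩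
  have hu : ∀ i : {i // i ∈ t}, (u i) ^ p ^ k = 1 := by
    intro i
    apply Subtype.ext
    show (f i.1) ^ p ^ k = 1
    exact hpow i.1 i.2
  have hS' : (∑ i ∈ t.attach, u i) = c • (1 : Algebra.adjoin ℂ s) := by
    apply Subtype.ext
    show ((∑ i ∈ t.attach, u i : Algebra.adjoin ℂ s) : Module.End ℂ M)
        = c • (1 : Module.End ℂ M)
    rw [← hsum]
    have h1 : ((∑ i ∈ t.attach, u i : Algebra.adjoin ℂ s) : Module.End ℂ M)
        = ∑ i ∈ t.attach, f i.1 := by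
      simp [u, AddSubmonoidClass.coe_finset_sum]
    rw [h1]
    exact Finset.sum_attach t f
  have hcval : c = ∑ i ∈ t.attach, ψ (u i) := by
    have := congrArg ψ hS'
    rw [map_sum, map_smul, map_one, smul_eq_mul, mul_one] at this
    exact this.symm
  rw [hcval]
  apply aux_sum_ne_zero hp k
  · intro i _
    rw [← map_pow, hu i, map_one]
  · rwa [Finset.card_attach]

/-- The conjugacy class of an element centralizing a Sylow `p`-subgroup has size
prime to `p`. -/
lemma aux_card (G : Type) [Group G] [Fintype G] (p : ℕ) [Fact p.Prime] (P : Sylow p G)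
    (x : G) (hxZ : ∀ y ∈ P.1, x * y = y * x) :
    ¬ p ∣ Nat.card (MulAction.orbit (ConjAct G) x) := by
  classical
  intro hdvd
  haveI : Fintype (ConjAct G) := inferInstanceAs (Fintype G)
  haveI : Fintype (MulAction.orbit (ConjAct G) x) := Fintype.ofFinite _
  haveI : Fintype (MulAction.stabilizer (ConjAct G) x) := Fintype.ofFinite _
  have hle : (P.1.map (ConjAct.toConjAct (G := G)).toMonoidHom)
      ≤ MulAction.stabilizer (ConjAct G) x := by
    rintro g ⟨h, hh, rfl⟩
    show ConjAct.toConjAct h • x = x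
    rw [ConjAct.toConjAct_smul, ← hxZ h hh, mul_inv_cancel_right]
  have hcardP : Nat.card (P.1.map (ConjAct.toConjAct (G := G)).toMonoidHom) = Nat.card P.1 :=
    (Nat.card_congr (P.1.equivMapOfInjective _ ConjAct.toConjAct.injective).toEquiv).symm
  have hdvd2 : Nat.card P.1 ∣ Nat.card (MulAction.stabilizer (ConjAct G) x) := by
    rw [← hcardP]; exact Subgroup.card_dvd_of_le hle
  have horb := MulAction.card_orbit_mul_card_stabilizer_eq_card_group (G := ConjAct G) x
  have hP : Nat.card P.1 = p ^ (Nat.card G).factorization p := P.card_eq_multiplicity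
  have hGcard : Nat.card (ConjAct G) = Nat.card G := rfl
  have hbig : p ^ ((Nat.card G).factorization p + 1) ∣ Nat.card G := by
    rw [pow_succ]
    have h1 : p ^ (Nat.card G).factorization p ∣
        Nat.card (MulAction.stabilizer (ConjAct G) x) := hP ▸ hdvd2
    have h2 : (p ^ (Nat.card G).factorization p) * p ∣
        Nat.card (MulAction.stabilizer (ConjAct G) x) * Nat.card (MulAction.orbit (ConjAct G) x) :=
      mul_dvd_mul h1 hdvd
    rw [← hGcard]
    calc (p ^ (Nat.card G).factorization p) * p
        ∣ Nat.card (MulAction.stabilizer (ConjAct G) x)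
          * Nat.card (MulAction.orbit (ConjAct G) x) := h2
      _ = Nat.card (ConjAct G) := by
          rw [Nat.card_eq_fintype_card, Nat.card_eq_fintype_card, Nat.card_eq_fintype_card,
            mul_comm]
          exact horb
  exact Nat.pow_succ_factorization_not_dvd Nat.card_pos.ne' Fact.out hbig

/-- if `A` is a nontrivial normal abelian subgroup of the finite
group `G` and `P` a Sylow `p`-subgroup, then every `x ∈ A ∩ Z(P)` is
non-vanishing in `G`: no irreducible complex character of `G` vanishes at `x`. -/
theorem stmt4 (G : Type) [Group G] [Fintype G] (A : Subgroup G)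
    (hA : A.Normal) (hA1 : A ≠ ⊥) (hAab : ∀ x ∈ A, ∀ y ∈ A, x * y = y * x)
    (p : ℕ) (hp : p.Prime) [Fact p.Prime] (P : Sylow p G)
    (x : G) (hxA : x ∈ A) (hxP : x ∈ P.1) (hxZ : ∀ y ∈ P.1, x * y = y * x) :
    ∀ V : FDRep ℂ G, Simple V → V.character x ≠ 0 := by
  classical
  intro V hV
  haveI := hV
  -- `x` is a `p`-element
  obtain ⟨k, hk⟩ := P.2 ⟨x, hxP⟩
  have hxk : x ^ p ^ k = 1 := by
    have := congrArg Subtype.val hk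
    simpa using this
  -- the conjugacy class of `x` as a finset
  haveI : Fintype (MulAction.orbit (ConjAct G) x) := Fintype.ofFinite _
  let C : Finset G := (MulAction.orbit (ConjAct G) x).toFinset
  have hmem : ∀ y : G, y ∈ C ↔ ∃ g : G, g * x * g⁻¹ = y := by
    intro y
    rw [Set.mem_toFinset, MulAction.mem_orbit_iff]
    constructor
    · rintro ⟨g, rfl⟩
      exact ⟨ConjAct.ofConjAct g, (ConjAct.smul_def g x).symm⟩
    · rintro ⟨g, rfl⟩
      exact ⟨ConjAct.toConjAct g, ConjAct.toConjAct_smul g x⟩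
  have hCA : ∀ y ∈ C, y ∈ A := by
    intro y hy
    obtain ⟨g, rfl⟩ := (hmem y).mp hy
    exact hA.conj_mem x hxA g
  have hC : ∀ g : G, ∀ y ∈ C, g * y * g⁻¹ ∈ C := by
    intro g y hy
    obtain ⟨h, rfl⟩ := (hmem y).mp hy
    refine (hmem _).mpr ⟨g * h, ?_⟩
    group
  have hCcomm : ∀ y ∈ C, ∀ z ∈ C, y * z = z * y := fun y hy z hz =>
    hAab y (hCA y hy) z (hCA z hz)
  have hpow : ∀ y ∈ C, y ^ p ^ k = 1 := by
    intro y hy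
    obtain ⟨g, rfl⟩ := (hmem y).mp hy
    rw [conj_pow, hxk, mul_one, mul_inv_cancel]
  have hcard : ¬ p ∣ C.card := by
    have : C.card = Nat.card (MulAction.orbit (ConjAct G) x) := by
      rw [Set.toFinset_card, Nat.card_eq_fintype_card]
    rw [this]
    exact aux_card G p P x hxZ
  have hchar : ∀ y ∈ C, V.character y = V.character x := by
    intro y hy
    obtain ⟨g, rfl⟩ := (hmem y).mp hy
    exact FDRep.char_conj V x g
  -- the class-sum endomorphism
  let Slin : Module.End ℂ V := ∑ y ∈ C, V.ρ y
  have hcomm : ∀ g : G, (V.ρ g) * Slin = Slin * (V.ρ g) := by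
    intro g
    show (V.ρ g) * (∑ y ∈ C, V.ρ y) = (∑ y ∈ C, V.ρ y) * (V.ρ g)
    rw [Finset.mul_sum, Finset.sum_mul]
    refine Finset.sum_nbij' (fun y => g * y * g⁻¹) (fun y => g⁻¹ * y * g) ?_ ?_ ?_ ?_ ?_
    · exact fun y hy => hC g y hy
    · intro y hy
      have := hC g⁻¹ y hy
      simpa using this
    · intro y _; group
    · intro y _; group
    · intro y _
      rw [← map_mul, ← map_mul]
      congr 1
      group
  let S : V ⟶ V := { hom := FGModuleCat.ofHom Slin, comm := fun g =>
    ObjectProperty.hom_ext (h := ModuleCat.hom_ext (hcomm g).symm) }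
  obtain ⟨c, hc⟩ : ∃ c : ℂ, c • (𝟙 V) = S :=
    CategoryTheory.endomorphism_simple_eq_smul_id ℂ S
  have hchom : Slin = c • (1 : Module.End ℂ V) := by
    have := congrArg (fun f : V ⟶ V => f.hom) hc
    simp only [Action.smul_hom] at this
    exact (congrArg (fun f => f.hom.hom) this).symm
  -- nontriviality of the underlying space
  haveI hnt : Nontrivial V := by
    by_contra h
    rw [not_nontrivial_iff_subsingleton] at h
    refine (CategoryTheory.id_nonzero V) ?_
    apply Action.Hom.ext
    apply ObjectProperty.hom_ext
    apply ModuleCat.hom_ext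
    apply LinearMap.ext
    intro v
    exact h.elim _ _
  haveI hnt2 : Nontrivial (↑V.V) := hnt
  -- trace computation
  have htr : (C.card : ℂ) * V.character x = c * (Module.finrank ℂ V : ℂ) := by
    have t1 : LinearMap.trace ℂ V Slin = ∑ y ∈ C, V.character y := by
      simp only [Slin, map_sum]; rfl
    rw [Finset.sum_congr rfl hchar, Finset.sum_const, nsmul_eq_mul] at t1
    have t2 : LinearMap.trace ℂ V Slin = c * (Module.finrank ℂ V : ℂ) := by
      rw [hchom, map_smul, Module.End.one_eq_id, LinearMap.trace_id, smul_eq_mul]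
    rw [← t1, t2]
  -- the scalar is nonzero
  have hcne : c ≠ 0 := by
    refine aux_scalar_ne_zero C (fun y => V.ρ y) ?_ hp k ?_ hcard c ?_
    · intro y hy z hz
      rw [← map_mul, ← map_mul, hCcomm y hy z hz]
    · intro y hy
      rw [← map_pow, hpow y hy, map_one]
    · exact hchom
  intro hzero
  rw [hzero, mul_zero] at htr
  have hfr : (Module.finrank ℂ V : ℂ) ≠ 0 := by
    exact_mod_cast (Module.finrank_pos (R := ℂ) (M := ↑V.V)).ne'
  exact (mul_ne_zero hcne hfr) htr.symm
end

section
/- Let G be a finite group with a nontrivial normal nilpotent subgroup N, p a prime, and P a Sylow p-subgroup of G. Then no irreducible complex character of G vanishes on any element of N ∩ Z(P); that is, the elements of N ∩ Z(P) are non-vanishing in G. -/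
open CategoryTheory

open Polynomial in
lemma sum_ppow_roots_ne_zero {α : Type*} {p n : ℕ} (hp : Fact p.Prime)
    (s : Finset α) (μ : α → ℂ) (h : ∀ a ∈ s, μ a ^ (p ^ n) = 1)
    (hcard : ¬ (p : ℕ) ∣ s.card) : ∑ a ∈ s, μ a ≠ 0 := by
  classical
  intro hS
  set m : ℕ := p ^ (n + 1) with hm
  have hm0 : m ≠ 0 := pow_ne_zero _ hp.out.pos.ne'
  have hprim : IsPrimitiveRoot (Complex.exp (2 * Real.pi * Complex.I / m)) m :=
    Complex.isPrimitiveRoot_exp m hm0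
  set ζ := Complex.exp (2 * Real.pi * Complex.I / m)
  have h' : ∀ a ∈ s, μ a ^ m = 1 := by
    intro a ha
    have hthis : μ a ^ (p ^ n) = 1 := h a ha
    rw [hm, pow_succ, pow_mul, hthis, one_pow]
  have hex : ∀ a ∈ s, ∃ i, ζ ^ i = μ a := by
    intro a ha
    haveI : NeZero m := ⟨hm0⟩
    obtain ⟨i, _, hi⟩ := hprim.eq_pow_of_pow_eq_one (h' a ha)
    exact ⟨i, hi⟩
  choose e he using hex
  set f : ℤ[X] := ∑ a ∈ s.attach, X ^ (e a a.2) with hf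
  have haev : aeval ζ f = 0 := by
    rw [hf, map_sum]
    have hcg : ∀ a ∈ s.attach, aeval ζ ((X : ℤ[X]) ^ (e a a.2)) = μ a := by
      intro a _
      simp [he a a.2]
    rw [Finset.sum_congr rfl hcg, Finset.sum_attach s μ, hS]
  have hint : IsIntegral ℤ ζ := hprim.isIntegral (Nat.pos_of_ne_zero hm0)
  have hdvd : minpoly ℤ ζ ∣ f := minpoly.isIntegrallyClosed_dvd hint haev
  rw [← Polynomial.cyclotomic_eq_minpoly hprim (Nat.pos_of_ne_zero hm0)] at hdvd
  have heval : eval 1 (cyclotomic m ℤ) ∣ eval 1 f := eval_dvd hdvd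
  rw [hm, Polynomial.eval_one_cyclotomic_prime_pow] at heval
  have hf1 : eval 1 f = (s.card : ℤ) := by
    rw [hf, eval_finset_sum]
    simp
  rw [hf1] at heval
  exact hcard (Int.natCast_dvd_natCast.mp heval)


lemma exists_common_eigenvector : ∀ (k : ℕ) (M : Type) (_ : AddCommGroup M), ∀ (_ : Module ℂ M),
    ∀ (_ : FiniteDimensional ℂ M) (_ : Nontrivial M) (f : Fin k → Module.End ℂ M),
    (∀ i j, Commute (f i) (f j)) →
    ∃ v : M, v ≠ 0 ∧ ∀ i, ∃ μ : ℂ, f i v = μ • v := by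
  intro k
  induction k with
  | zero =>
    intro M _ _ _ _ f _
    obtain ⟨v, hv⟩ := exists_ne (0 : M)
    exact ⟨v, hv, fun i => i.elim0⟩
  | succ k ih =>
    intro M _ _ _ _ f hcomm
    obtain ⟨μ₀, hμ₀⟩ := Module.End.exists_eigenvalue (f 0)
    set E := (f 0).eigenspace μ₀ with hE
    have hE0 : E ≠ ⊥ := hμ₀
    haveI : Nontrivial E := Submodule.nontrivial_iff_ne_bot.mpr hE0
    have hmaps : ∀ i : Fin k, Set.MapsTo (f i.succ) E E := fun i =>
      Module.End.mapsTo_genEigenspace_of_comm (hcomm 0 i.succ) μ₀ 1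
    set g : Fin k → Module.End ℂ E := fun i => (f i.succ).restrict (hmaps i) with hg
    have hgcomm : ∀ i j, Commute (g i) (g j) := by
      intro i j
      have hc := hcomm i.succ j.succ
      ext v
      have h2 := congrFun (congrArg DFunLike.coe hc) (v : M)
      simp only [Module.End.mul_apply] at h2
      simp only [Module.End.mul_apply, hg, LinearMap.restrict_apply]
      exact h2
    obtain ⟨v, hv0, hv⟩ := ih E inferInstance inferInstance inferInstance inferInstance g hgcomm
    refine ⟨(v : M), by simpa using hv0, ?_⟩
    intro i
    refine Fin.cases ?_ ?_ i
    · exact ⟨μ₀, Module.End.mem_eigenspace_iff.mp v.2⟩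
    · intro j
      obtain ⟨μ, hμ⟩ := hv j
      refine ⟨μ, ?_⟩
      have := congrArg (Subtype.val) hμ
      simp [hg] at this
      exact this


lemma exists_abelian_normal_pgroup (G : Type) [Group G] [Fintype G] (N : Subgroup G)
    (hN : N.Normal) (p : ℕ) [Fact p.Prime] (hNnil : Group.IsNilpotent N) (P : Sylow p G)
    (x : G) (hxN : x ∈ N) (hxP : x ∈ P.1) (hxZ : ∀ y ∈ P.1, x * y = y * x) :
    ∃ A : Subgroup G, A.Normal ∧ IsPGroup p A ∧ x ∈ A ∧
      ∀ a ∈ A, ∀ b ∈ A, a * b = b * a := by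
  classical
  haveI := hN
  obtain ⟨Q₀⟩ : Nonempty (Sylow p N) := inferInstance
  have htfae := (isNilpotent_of_finite_tfae (G := ↥N)).out 0 3
  have hQ₀norm : (Q₀ : Subgroup N).Normal := htfae.mp hNnil p ‹_› Q₀
  haveI := hQ₀norm
  haveI : (Q₀ : Subgroup N).Characteristic := Sylow.characteristic_of_normal Q₀ hQ₀norm
  set Q : Subgroup G := (Q₀ : Subgroup N).map N.subtype with hQdef
  haveI hQnorm : Q.Normal := by infer_instance
  have hQp : IsPGroup p Q := Q₀.2.map N.subtype
  have hxord : ∃ k : ℕ, x ^ p ^ k = 1 := by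
    obtain ⟨k, hk⟩ := P.2 ⟨x, hxP⟩
    exact ⟨k, by simpa [← Subtype.ext_iff, SubmonoidClass.coe_pow] using congrArg Subtype.val hk⟩
  have hxQ : x ∈ Q := by
    have hxN' : IsPGroup p (Subgroup.zpowers (⟨x, hxN⟩ : N)) := by
      intro g
      obtain ⟨m, hm⟩ := Subgroup.mem_zpowers_iff.mp g.2
      obtain ⟨k, hk⟩ := hxord
      refine ⟨k, ?_⟩
      have h1 : ((⟨x, hxN⟩ : N) ^ m) ^ (p ^ k : ℕ) = 1 := by
        apply Subtype.ext
        push_cast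
        rw [← zpow_natCast, ← zpow_mul, mul_comm, zpow_mul, zpow_natCast, hk, one_zpow]
      apply Subtype.ext
      rw [SubmonoidClass.coe_pow, ← hm]
      exact_mod_cast congrArg Subtype.val h1
    obtain ⟨R, hR⟩ := hxN'.exists_le_sylow
    haveI := Sylow.unique_of_normal Q₀ hQ₀norm
    have hRQ : R = Q₀ := Subsingleton.elim _ _
    have hmem : (⟨x, hxN⟩ : N) ∈ (Q₀ : Subgroup N) := hRQ ▸ hR (Subgroup.mem_zpowers _)
    exact ⟨⟨x, hxN⟩, hmem, rfl⟩
  have hQP : Q ≤ P.1 := by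
    obtain ⟨P', hP'⟩ := hQp.exists_le_sylow
    obtain ⟨g, hg⟩ := MulAction.exists_smul_eq G P' P
    intro q hq
    have h1 : g⁻¹ * q * g ∈ Q := by simpa using hQnorm.conj_mem q hq g⁻¹
    have h2 : g⁻¹ * q * g ∈ P'.1 := hP' h1
    have h3 : q ∈ (g • P').1 := by
      rw [Sylow.smul_def, Sylow.pointwise_smul_def]
      refine ⟨g⁻¹ * q * g, h2, ?_⟩
      simp [MulAut.conj, mul_assoc]
    rwa [hg] at h3
  refine ⟨Q ⊓ Subgroup.centralizer (Q : Set G), ?_, hQp.to_inf_left, ?_, ?_⟩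
  · constructor
    intro a ha g
    rw [Subgroup.mem_inf] at ha
    rw [Subgroup.mem_inf]
    refine ⟨hQnorm.conj_mem a ha.1 g, Subgroup.mem_centralizer_iff.mpr ?_⟩
    intro q hq
    have hq' : g⁻¹ * q * g ∈ Q := by simpa using hQnorm.conj_mem q hq g⁻¹
    have hcomm := Subgroup.mem_centralizer_iff.mp ha.2 _ hq'
    calc q * (g * a * g⁻¹) = g * ((g⁻¹ * q * g) * a) * g⁻¹ := by group
      _ = g * (a * (g⁻¹ * q * g)) * g⁻¹ := by rw [hcomm]
      _ = g * a * g⁻¹ * q := by group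
  · rw [Subgroup.mem_inf]
    refine ⟨hxQ, Subgroup.mem_centralizer_iff.mpr ?_⟩
    intro q hq
    exact (hxZ q (hQP hq)).symm
  · intro a ha b hb
    rw [Subgroup.mem_inf] at ha hb
    exact Subgroup.mem_centralizer_iff.mp hb.2 a ha.1

/-- if `N` is a nontrivial normal nilpotent subgroup of the finite
group `G` and `P` a Sylow `p`-subgroup, then no irreducible complex character
of `G` vanishes on any element of `N ∩ Z(P)`. -/
theorem stmt5 (G : Type) [Group G] [Fintype G] (N : Subgroup G)
    (hN : N.Normal) (hN1 : N ≠ ⊥) (hNnil : Group.IsNilpotent N)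
    (p : ℕ) (hp : p.Prime) [Fact p.Prime] (P : Sylow p G)
    (x : G) (hxN : x ∈ N) (hxP : x ∈ P.1) (hxZ : ∀ y ∈ P.1, x * y = y * x) :
    ∀ V : FDRep ℂ G, Simple V → V.character x ≠ 0 := by
  classical
  intro V hV hchi
  haveI := hV
  obtain ⟨A, hAnorm, hAp, hxA, hAcomm⟩ :=
    exists_abelian_normal_pgroup G N hN p hNnil P x hxN hxP hxZ
  -- the conjugacy class of x as a finset
  set K : Finset G := Set.toFinset (MulAction.orbit (ConjAct G) x) with hK
  have hKmem : ∀ y, y ∈ K ↔ ∃ g : G, g * x * g⁻¹ = y := by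
    intro y
    rw [hK, Set.mem_toFinset]
    constructor
    · rintro ⟨g, rfl⟩
      exact ⟨ConjAct.ofConjAct g, (ConjAct.smul_def g x).symm⟩
    · rintro ⟨g, rfl⟩
      refine ⟨ConjAct.toConjAct g, ?_⟩
      show ConjAct.toConjAct g • x = g * x * g⁻¹
      rw [ConjAct.smul_def, ConjAct.ofConjAct_toConjAct]
  have hKA : ∀ y ∈ K, y ∈ A := by
    intro y hy
    obtain ⟨g, rfl⟩ := (hKmem y).mp hy
    exact hAnorm.conj_mem x hxA g
  have hKclosed : ∀ (g : G), ∀ y ∈ K, g * y * g⁻¹ ∈ K := by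
    intro g y hy
    obtain ⟨h, rfl⟩ := (hKmem y).mp hy
    exact (hKmem _).mpr ⟨g * h, by group⟩
  -- p does not divide the class size
  have hcard : ¬ (p : ℕ) ∣ K.card := by
    have hK1 : K.card = (MulAction.orbit (ConjAct G) x).ncard := by
      rw [hK]; exact (Set.ncard_eq_toFinset_card' _).symm
    have hK2 : (MulAction.stabilizer (ConjAct G) x).index = K.card := by
      rw [MulAction.index_stabilizer, hK1]
    have hcent : (Subgroup.centralizer {x}).index = K.card := by
      rw [Subgroup.centralizer_eq_comap_stabilizer]
      exact (Subgroup.index_comap_of_surjective _ (ConjAct.toConjAct (G := G)).surjective).trans hK2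
    have hPle : P.1 ≤ Subgroup.centralizer {x} := by
      intro y hy
      rw [Subgroup.mem_centralizer_iff]
      intro h hh
      rw [Set.mem_singleton_iff] at hh
      subst hh
      exact hxZ y hy
    have hdvd : (Subgroup.centralizer {x}).index ∣ P.1.index :=
      Subgroup.index_dvd_of_le hPle
    intro hpdvd
    exact P.not_dvd_index (dvd_trans (hcent ▸ hpdvd) hdvd)
  -- V is a nontrivial module
  haveI hVnt : Nontrivial V := by
    by_contra h
    haveI hss := not_nontrivial_iff_subsingleton.mp h
    apply CategoryTheory.id_nonzero V
    apply Action.hom_ext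
    apply FGModuleCat.hom_ext
    apply LinearMap.ext
    intro v
    exact hss.allEq _ _
  -- the sum over the class, as an endomorphism of V
  set Tlin : V →ₗ[ℂ] V := ∑ y ∈ K, V.ρ y with hTlin
  have hTcomm : ∀ g : G, (V.ρ g) * Tlin = Tlin * (V.ρ g) := by
    intro g
    rw [hTlin, Finset.mul_sum, Finset.sum_mul]
    have h1 : ∀ y ∈ K, (V.ρ g) * (V.ρ y) = (V.ρ (g * y * g⁻¹)) * (V.ρ g) := by
      intro y hy
      rw [← map_mul, ← map_mul]
      congr 1
      group
    rw [Finset.sum_congr rfl h1]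
    refine Finset.sum_nbij' (fun y => g * y * g⁻¹) (fun y => g⁻¹ * y * g) ?_ ?_ ?_ ?_ ?_
    · intro y hy; exact hKclosed g y hy
    · intro y hy; simpa using hKclosed g⁻¹ y hy
    · intro y _; group
    · intro y _; group
    · intro y _; rfl
  set T : V ⟶ V := ⟨FGModuleCat.ofHom Tlin, by
    intro g
    ext v
    exact congrArg (fun f => f v) (hTcomm g).symm⟩ with hT
  obtain ⟨c, hc⟩ := CategoryTheory.endomorphism_simple_eq_smul_id ℂ T
  -- trace computation
  have htrace : (K.card : ℂ) * V.character x = c * (Module.finrank ℂ V : ℂ) := by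
    have h1 : LinearMap.trace ℂ V Tlin = ∑ y ∈ K, V.character y := by
      rw [hTlin, map_sum]; rfl
    have h2 : ∀ y ∈ K, V.character y = V.character x := by
      intro y hy
      obtain ⟨g, rfl⟩ := (hKmem y).mp hy
      exact FDRep.char_conj V x g
    rw [Finset.sum_congr rfl h2, Finset.sum_const, nsmul_eq_mul] at h1
    have h3 : Tlin = c • (LinearMap.id : V →ₗ[ℂ] V) := by
      have := congrArg Action.Hom.hom hc
      rw [Action.smul_hom, Action.id_hom] at this
      exact congrArg (fun f : V.V ⟶ V.V => f.hom.hom) this.symm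
    rw [h3, map_smul, LinearMap.trace_id, smul_eq_mul] at h1
    exact h1.symm
  rw [hchi, mul_zero] at htrace
  have hd : (Module.finrank ℂ V : ℂ) ≠ 0 := by
    have := Module.finrank_pos (R := ℂ) (M := V)
    exact_mod_cast Nat.cast_ne_zero.mpr this.ne'
  have hc0 : c = 0 := by
    rcases mul_eq_zero.mp htrace.symm with h | h
    · exact h
    · exact absurd h hd
  have hT0 : Tlin = 0 := by
    have := congrArg Action.Hom.hom hc
    rw [Action.smul_hom, Action.id_hom, hc0, zero_smul] at this
    exact congrArg (fun f : V.V ⟶ V.V => f.hom.hom) this.symm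
  -- common eigenvector
  have hcommEnd : ∀ (i j : Fin K.card), Commute
      (V.ρ ((K.equivFin.symm i : G))) (V.ρ ((K.equivFin.symm j : G))) := by
    intro i j
    have hi : ((K.equivFin.symm i : G)) ∈ A := hKA _ (K.equivFin.symm i).2
    have hj : ((K.equivFin.symm j : G)) ∈ A := hKA _ (K.equivFin.symm j).2
    show _ * _ = _ * _
    rw [← map_mul, ← map_mul, hAcomm _ hi _ hj]
  obtain ⟨v, hv0, hv⟩ := exists_common_eigenvector K.card V inferInstance inferInstance
    inferInstance inferInstance (fun i => V.ρ ((K.equivFin.symm i : G))) hcommEnd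
  have hall : ∀ y : {z // z ∈ K}, ∃ μ : ℂ, V.ρ (y : G) v = μ • v := by
    intro y
    obtain ⟨μ, hμ⟩ := hv (K.equivFin y)
    refine ⟨μ, ?_⟩
    rwa [Equiv.symm_apply_apply] at hμ
  choose μf hμf using hall
  -- eigenvalues are p-power roots of unity
  obtain ⟨n, hn⟩ := IsPGroup.iff_card.mp hAp
  have hroot : ∀ y : {z // z ∈ K}, μf y ^ (p ^ n) = 1 := by
    intro y
    have hyA : (y : G) ∈ A := hKA _ y.2
    have hypow : (y : G) ^ (p ^ n) = 1 := by
      have h1 : (⟨(y : G), hyA⟩ : A) ^ (p ^ n) = 1 := by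
        rw [← hn]; exact pow_card_eq_one'
      have := congrArg Subtype.val h1
      simpa [SubmonoidClass.coe_pow] using this
    have hpow : ∀ m : ℕ, ((V.ρ (y : G)) ^ m) v = μf y ^ m • v := by
      intro m
      induction m with
      | zero => simp
      | succ m ihm =>
        rw [pow_succ, pow_succ, Module.End.mul_apply, hμf, LinearMap.map_smul, ihm,
          smul_smul, mul_comm]
    have h2 := hpow (p ^ n)
    rw [← map_pow, hypow, map_one] at h2
    have h3 : (μf y ^ p ^ n - 1) • v = 0 := by
      rw [sub_smul, one_smul, ← h2]
      simp
    rcases smul_eq_zero.mp h3 with h | h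
    · exact sub_eq_zero.mp h
    · exact absurd h hv0
  -- the sum of eigenvalues vanishes
  have hsum : ∑ y ∈ K.attach, μf y = 0 := by
    have h1 : Tlin v = 0 := by rw [hT0]; rfl
    have h2 : Tlin v = (∑ y ∈ K.attach, μf y) • v := by
      rw [hTlin, LinearMap.sum_apply, ← Finset.sum_attach K (fun y => (V.ρ y) v)]
      rw [Finset.sum_congr rfl (fun y _ => hμf y), ← Finset.sum_smul]
    rw [h1] at h2
    rcases smul_eq_zero.mp h2.symm with h | h
    · exact h
    · exact absurd h hv0
  have hcard' : ¬ (p : ℕ) ∣ K.attach.card := by rwa [Finset.card_attach]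
  exact sum_ppow_roots_ne_zero (n := n) ‹Fact p.Prime› K.attach μf (fun a _ => hroot a) hcard' hsum
end

section
/- Let G be a finite group, p a prime, and P a Sylow p-subgroup of G. Then every element of F(G) ∩ Z(P) is non-vanishing in G, where F(G) is the Fitting subgroup of G. -/
open CategoryTheory
open Module

/-! ### Auxiliary lemmas -/

theorem sum_prime_pow_roots_ne_zero {p k : ℕ} (hp : p.Prime) {ι : Type*} (s : Finset ι)
    (f : ι → ℂ) (hf : ∀ i ∈ s, f i ^ p ^ k = 1) (hcard : ¬ (p : ℕ) ∣ s.card) :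
    ∑ i ∈ s, f i ≠ 0 := by
  classical
  haveI : Fact (Nat.Prime p) := ⟨hp⟩
  rcases Nat.eq_zero_or_pos k with rfl | hk
  · have : ∀ i ∈ s, f i = 1 := by intro i hi; simpa using hf i hi
    rw [Finset.sum_congr rfl this, Finset.sum_const, nsmul_eq_mul, mul_one]
    intro h
    have : s.card = 0 := by exact_mod_cast h
    exact hcard (this ▸ dvd_zero p)
  · set m := p ^ k with hm
    have hmne : m ≠ 0 := pow_ne_zero k hp.pos.ne'
    haveI : NeZero m := ⟨hmne⟩
    set ζ : ℂ := Complex.exp (2 * Real.pi * Complex.I / m) with hζ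
    have hprim : IsPrimitiveRoot ζ m := Complex.isPrimitiveRoot_exp m hmne
    have hpow : ∀ i ∈ s, ∃ a : ℕ, a < m ∧ ζ ^ a = f i := by
      intro i hi
      obtain ⟨a, ha, h⟩ := hprim.eq_pow_of_pow_eq_one (hf i hi)
      exact ⟨a, ha, h⟩
    choose a ha hfa using hpow
    intro hsum
    set q : Polynomial ℤ := ∑ i ∈ s.attach, Polynomial.X ^ (a i i.2) with hq
    have haev : Polynomial.aeval ζ q = 0 := by
      rw [hq]
      rw [map_sum]
      calc ∑ i ∈ s.attach, Polynomial.aeval ζ (Polynomial.X ^ (a i i.2) : Polynomial ℤ)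
          = ∑ i ∈ s.attach, f i := by
            refine Finset.sum_congr rfl fun i _ => ?_
            simp [hfa i i.2]
        _ = ∑ i ∈ s, f i := Finset.sum_attach _ _
        _ = 0 := hsum
    have hint : IsIntegral ℤ ζ := hprim.isIntegral (Nat.pos_of_ne_zero hmne)
    have hdvd : minpoly ℤ ζ ∣ q := minpoly.isIntegrallyClosed_dvd hint haev
    have hcyc : Polynomial.cyclotomic m ℤ = minpoly ℤ ζ :=
      Polynomial.cyclotomic_eq_minpoly hprim (Nat.pos_of_ne_zero hmne)
    rw [← hcyc] at hdvd
    obtain ⟨r, hr⟩ := hdvd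
    have := congrArg (Polynomial.eval 1) hr
    rw [Polynomial.eval_mul] at this
    obtain ⟨k', rfl⟩ : ∃ k', k = k' + 1 := ⟨k - 1, by omega⟩
    rw [Polynomial.eval_one_cyclotomic_prime_pow] at this
    have hq1 : Polynomial.eval 1 q = s.card := by
      rw [hq]
      rw [Polynomial.eval_finset_sum]
      simp [Finset.card_attach]
    rw [hq1] at this
    have hdvd2 : (p : ℤ) ∣ (s.card : ℤ) := ⟨_, this⟩
    exact hcard (by exact_mod_cast hdvd2)

theorem abelian_normal_exists (G : Type) [Group G] [Fintype G]
    (F : Subgroup G) (hFnorm : F.Normal) (hFnil : Group.IsNilpotent F)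
    (p : ℕ) (hp : p.Prime) [Fact p.Prime] (P : Sylow p G)
    (x : G) (hxF : x ∈ F) (hxP : x ∈ P.1) (hxZ : ∀ y ∈ P.1, x * y = y * x) :
    ∃ A : Subgroup G, A.Normal ∧ (∀ a ∈ A, ∀ b ∈ A, a * b = b * a) ∧ x ∈ A := by
  haveI := hFnil
  haveI := hFnorm
  obtain ⟨k, hk⟩ := P.2 ⟨x, hxP⟩
  have hxpow : x ^ p ^ k = 1 := by
    have := congrArg (Subtype.val) hk
    simpa using this
  set x' : F := ⟨x, hxF⟩ with hx'
  have hx'pow : x' ^ p ^ k = 1 := by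
    ext; simpa using hxpow
  have hpgrp : IsPGroup p (Subgroup.zpowers x') := by
    rw [IsPGroup.iff_card]
    have hdvd : orderOf x' ∣ p ^ k := orderOf_dvd_of_pow_eq_one hx'pow
    obtain ⟨m, hm, hordm⟩ := (Nat.dvd_prime_pow hp).mp hdvd
    exact ⟨m, by rw [Nat.card_zpowers, hordm]⟩
  obtain ⟨Q₀, hQ₀⟩ := hpgrp.exists_le_sylow
  have hQ₀norm : (Q₀ : Subgroup F).Normal :=
    Sylow.normal_of_normalizerCondition (normalizerCondition_of_isNilpotent) Q₀
  haveI : Unique (Sylow p F) := Sylow.unique_of_normal Q₀ hQ₀norm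
  set Q : Subgroup G := (Q₀ : Subgroup F).map F.subtype with hQdef
  have hxQ : x ∈ Q := ⟨x', hQ₀ (Subgroup.mem_zpowers x'), rfl⟩
  have hQnorm : Q.Normal := by
    constructor
    intro q hq g
    obtain ⟨q₀, hq₀, rfl⟩ := hq
    let ψ : MulAut F := MulAut.conjNormal g
    have : (ψ • Q₀ : Sylow p F) = Q₀ := Subsingleton.elim _ _
    have hmem : ψ q₀ ∈ (Q₀ : Subgroup F) := by
      rw [← this]
      exact ⟨q₀, hq₀, rfl⟩
    exact ⟨ψ q₀, hmem, by simp [ψ]⟩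
  have hQp : IsPGroup p Q := (Q₀.2.map F.subtype)
  obtain ⟨R, hR⟩ := hQp.exists_le_sylow
  obtain ⟨g, hg⟩ := MulAction.exists_smul_eq G R P
  have hQP : Q ≤ P.1 := by
    intro q hq
    have h1 : g⁻¹ * q * g ∈ Q := by
      have := hQnorm.conj_mem q hq g⁻¹
      simpa using this
    have h2 : g⁻¹ * q * g ∈ R.1 := hR h1
    have h3 : q ∈ (g • R : Sylow p G).1 := by
      rw [Sylow.smul_def, Sylow.pointwise_smul_def]
      refine ⟨g⁻¹ * q * g, h2, ?_⟩
      simp [MulAut.conj, mul_assoc]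
    rwa [hg] at h3
  refine ⟨Q ⊓ Subgroup.centralizer Q, ?_, ?_, ?_⟩
  · constructor
    intro a ha g
    obtain ⟨haQ, haC⟩ := ha
    refine ⟨hQnorm.conj_mem a haQ g, ?_⟩
    intro q hq
    have hq' : g⁻¹ * q * g ∈ Q := by simpa using hQnorm.conj_mem q hq g⁻¹
    have := haC _ hq'
    have h2 := congrArg (fun y => g * y * g⁻¹) this
    simp only [mul_assoc] at h2 ⊢
    group at h2 ⊢
    convert h2 using 1
  · intro a ha b hb
    exact hb.2 a ha.1
  · exact ⟨hxQ, by intro q hq; exact (hxZ q (hQP hq)).symm⟩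

/-! ### Representation-theoretic lemmas -/

noncomputable def rhoEnd {G : Type} [Group G] (V : FDRep ℂ G) (g : G) : Module.End ℂ V := V.ρ g

theorem rhoEnd_mul {G : Type} [Group G] (V : FDRep ℂ G) (g h : G) :
    rhoEnd V (g * h) = rhoEnd V g * rhoEnd V h := by
  simp [rhoEnd, map_mul]

theorem rhoEnd_pow {G : Type} [Group G] (V : FDRep ℂ G) (g : G) (m : ℕ) :
    rhoEnd V g ^ m = rhoEnd V (g ^ m) := by
  induction m with
  | zero =>
    rw [pow_zero, pow_zero]
    ext v
    show v = (V.ρ (1:G)) v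
    rw [map_one]
    rfl
  | succ n ih => rw [pow_succ, ih, ← rhoEnd_mul, pow_succ]

theorem rhoEnd_one {G : Type} [Group G] (V : FDRep ℂ G) : rhoEnd V (1 : G) = 1 := by
  have := rhoEnd_pow V 1 0
  simpa using this.symm

section WtSpace

variable {G : Type} [Group G] (V : FDRep ℂ G) (A : Subgroup G)

/-- weight space -/
noncomputable def wtSpace (χ : A → ℂ) : Submodule ℂ V :=
  ⨅ a : A, (rhoEnd V (a : G)).maxGenEigenspace (χ a)

theorem wtSpace_span (hA : ∀ a ∈ A, ∀ b ∈ A, a * b = b * a) :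
    ⨆ χ : A → ℂ, wtSpace V A χ = ⊤ := by
  apply Module.End.iSup_iInf_maxGenEigenspace_eq_top_of_iSup_maxGenEigenspace_eq_top_of_commute
  · intro a b _
    show _ * _ = _ * _
    rw [← rhoEnd_mul, ← rhoEnd_mul, hA a a.2 b b.2]
  · intro a
    exact Module.End.iSup_maxGenEigenspace_eq_top _

theorem wtSpace_indep (hA : ∀ a ∈ A, ∀ b ∈ A, a * b = b * a) :
    iSupIndep (fun χ : A → ℂ => wtSpace V A χ) := by
  apply Module.End.independent_iInf_maxGenEigenspace_of_forall_mapsTo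
  intro a b φ
  apply Module.End.mapsTo_maxGenEigenspace_of_comm
  show _ * _ = _ * _
  rw [← rhoEnd_mul, ← rhoEnd_mul, hA b b.2 a a.2]

theorem wtSpace_mapsTo (χ : A → ℂ) (a : A) (hA : ∀ a ∈ A, ∀ b ∈ A, a * b = b * a) :
    Set.MapsTo (rhoEnd V (a : G)) (wtSpace V A χ) (wtSpace V A χ) := by
  intro v hv
  simp only [wtSpace, SetLike.mem_coe, Submodule.mem_iInf] at hv ⊢
  intro b
  refine Module.End.mapsTo_maxGenEigenspace_of_comm ?_ (χ b) (hv b)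
  show _ * _ = _ * _
  rw [← rhoEnd_mul, ← rhoEnd_mul, hA b b.2 a a.2]

/-- value of a weight on an element of finite order is a root of unity -/
theorem wtSpace_val_pow (χ : A → ℂ) (hne : wtSpace V A χ ≠ ⊥) (a : A) (m : ℕ)
    (hm : (a : G) ^ m = 1) : χ a ^ m = 1 := by
  have hle : wtSpace V A χ ≤ (rhoEnd V (a : G)).maxGenEigenspace (χ a) :=
    iInf_le _ a
  have hmax : (rhoEnd V (a : G)).maxGenEigenspace (χ a) ≠ ⊥ := fun h =>
    hne (le_bot_iff.mp (h ▸ hle))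
  have huni : (rhoEnd V (a : G)).HasUnifEigenvalue (χ a) ⊤ := hmax
  have heig : (rhoEnd V (a : G)).HasEigenvalue (χ a) :=
    Module.End.HasUnifEigenvalue.lt zero_lt_one huni
  obtain ⟨v, hv⟩ := heig.exists_hasEigenvector
  have hpow := hv.pow_apply m
  have h1 : ((rhoEnd V (a : G)) ^ m) v = v := by
    rw [rhoEnd_pow, hm]
    show (V.ρ 1) v = v
    rw [map_one]
    rfl
  rw [h1] at hpow
  have h3 : (χ a ^ m - 1) • v = 0 := by
    rw [sub_smul, one_smul, ← hpow, sub_self]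
  rcases smul_eq_zero.mp h3 with h | h
  · linear_combination h
  · exact absurd h hv.2

/-- conjugated weight -/
noncomputable def wtConj [hN : A.Normal] (χ : A → ℂ) (h : G) : A → ℂ :=
  fun a => χ ⟨h⁻¹ * (a : G) * h, by simpa using hN.conj_mem (a:G) a.2 h⁻¹⟩

theorem wtSpace_map_le [hN : A.Normal] (χ : A → ℂ) (h : G) :
    (wtSpace V A χ).map (rhoEnd V h) ≤ wtSpace V A (wtConj A χ h) := by
  rintro - ⟨v, hv, rfl⟩
  simp only [wtSpace, SetLike.mem_coe, Submodule.mem_iInf] at hv ⊢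
  intro a
  set a' : A := ⟨h⁻¹ * (a : G) * h, by simpa using hN.conj_mem (a:G) a.2 h⁻¹⟩ with ha'
  have hva' := hv a'
  rw [Module.End.mem_maxGenEigenspace] at hva'
  obtain ⟨k, hk⟩ := hva'
  rw [Module.End.mem_maxGenEigenspace]
  refine ⟨k, ?_⟩
  have hsemi : SemiconjBy (rhoEnd V h) (rhoEnd V (a' : G) - χ a' • 1)
      (rhoEnd V (a : G) - wtConj A χ h a • 1) := by
    have : wtConj A χ h a = χ a' := rfl
    rw [this]
    unfold SemiconjBy
    rw [mul_sub, sub_mul]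
    congr 1
    · rw [← rhoEnd_mul, ← rhoEnd_mul, ha']
      congr 1
      group
    · rw [mul_smul_comm, smul_mul_assoc, mul_one, one_mul]
  have := (hsemi.pow_right k).eq
  calc ((rhoEnd V (a : G) - wtConj A χ h a • 1) ^ k) ((rhoEnd V h) v)
      = (((rhoEnd V (a : G) - wtConj A χ h a • 1) ^ k) * rhoEnd V h) v := rfl
    _ = ((rhoEnd V h) * ((rhoEnd V (a' : G) - χ a' • 1) ^ k)) v := by rw [← this]
    _ = (rhoEnd V h) (((rhoEnd V (a' : G) - χ a' • 1) ^ k) v) := rfl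
    _ = 0 := by rw [hk, map_zero]

theorem wtSpace_trace_restrict (χ : A → ℂ) (a : A) (hA : ∀ a ∈ A, ∀ b ∈ A, a * b = b * a) :
    LinearMap.trace ℂ (wtSpace V A χ)
      ((rhoEnd V (a : G)).restrict (wtSpace_mapsTo V A χ a hA)) =
      χ a * (finrank ℂ (wtSpace V A χ) : ℂ) := by
  classical
  set W := wtSpace V A χ with hW
  set μ := χ a with hμ
  set f : Module.End ℂ W := (rhoEnd V (a : G)).restrict (wtSpace_mapsTo V A χ a hA) with hf
  set N : Module.End ℂ W := f - μ • 1 with hN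
  set n := finrank ℂ V with hn
  have hrespow : ∀ (m : ℕ) (w : W),
      (((f - μ • 1) ^ m) w : V) = (((rhoEnd V (a : G)) - μ • 1) ^ m) (w : V) := by
    intro m
    induction m with
    | zero => intro w; rfl
    | succ l ih =>
      intro w
      rw [pow_succ, pow_succ]
      have : ((f - μ • 1) w : V) = ((rhoEnd V (a : G)) - μ • 1) (w : V) := by
        simp [LinearMap.sub_apply, LinearMap.smul_apply, LinearMap.restrict_apply, hf]
        rfl
      show ((((f - μ • 1) ^ l)) ((f - μ • 1) w) : V) = _
      rw [ih ((f - μ • 1) w), this]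
      rfl
  have hNnil : N ^ n = 0 := by
    ext w
    have h0 : (w : V) ∈ wtSpace V A χ := w.2
    rw [wtSpace, Submodule.mem_iInf] at h0
    have hwmem : (w : V) ∈ (rhoEnd V (a : G)).maxGenEigenspace μ := h0 a
    rw [Module.End.maxGenEigenspace_eq_genEigenspace_finrank, Module.End.mem_genEigenspace] at hwmem
    obtain ⟨l, hl, hkill⟩ := hwmem
    have hln : l ≤ n := by exact_mod_cast hl
    have : (((rhoEnd V (a : G)) - μ • 1) ^ n) (w : V) = 0 := by
      have hsplit : ((rhoEnd V (a : G)) - μ • 1) ^ n =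
          ((rhoEnd V (a : G)) - μ • 1) ^ (n - l) * ((rhoEnd V (a : G)) - μ • 1) ^ l := by
        rw [← pow_add]
        congr 1
        omega
      rw [hsplit]
      show (((rhoEnd V (a : G)) - μ • 1) ^ (n - l)) ((((rhoEnd V (a : G)) - μ • 1) ^ l) (w : V)) = 0
      rw [hkill, map_zero]
    have h9 : (((f - μ • 1) ^ n) w : V) = 0 := (hrespow n w).trans this
    simpa using h9
  have htrN : LinearMap.trace ℂ W N = 0 := by
    have := LinearMap.isNilpotent_trace_of_isNilpotent (⟨n, hNnil⟩ : IsNilpotent N)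
    exact this.eq_zero
  have hfN : f = μ • 1 + N := by rw [hN]; abel
  rw [hfN, map_add, htrN, add_zero, map_smul, LinearMap.trace_one]
  simp [smul_eq_mul]

theorem wtConj_one [hN : A.Normal] (χ : A → ℂ) : wtConj A χ 1 = χ := by
  funext a
  unfold wtConj
  congr 1
  ext
  simp

theorem wtConj_wtConj [hN : A.Normal] (χ : A → ℂ) (h h' : G) :
    wtConj A (wtConj A χ h) h' = wtConj A χ (h' * h) := by
  funext a
  unfold wtConj
  congr 1
  ext
  simp [mul_assoc]

end WtSpace

/-! ### Simple subrepresentation lemma -/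

noncomputable def subRep {G : Type} [Group G] (V : FDRep ℂ G) (U : Submodule ℂ V)
    (hU : ∀ g : G, ∀ u ∈ U, V.ρ g u ∈ U) : FDRep ℂ G :=
  FDRep.of (V := ↥U)
  { toFun := fun g => (V.ρ g).restrict (p := U) (q := U) (fun u hu => hU g u hu)
    map_one' := by ext u; simp [LinearMap.restrict_apply]
    map_mul' := by intro g h; ext u; simp [LinearMap.restrict_apply] }

noncomputable def subRepHom {G : Type} [Group G] (V : FDRep ℂ G) (U : Submodule ℂ V)
    (hU : ∀ g : G, ∀ u ∈ U, V.ρ g u ∈ U) : subRep V U hU ⟶ V := by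
  refine Action.Hom.mk ?_ ?_
  · exact FGModuleCat.ofHom (U.subtype : _ →ₗ[ℂ] _)
  · intro g
    ext u
    rfl

theorem subRep_eq_top {G : Type} [Group G] (V : FDRep ℂ G) [Simple V] (U : Submodule ℂ V)
    (hU : ∀ g : G, ∀ u ∈ U, V.ρ g u ∈ U) (hne : U ≠ ⊥) : U = ⊤ := by
  have hmono : Mono (subRepHom V U hU) := by
    constructor
    intro W α β h
    ext w
    have := congrArg (fun (f : W ⟶ V) => f.hom w) h
    simp only at this
    refine Subtype.ext ?_
    exact this
  have hnz : subRepHom V U hU ≠ 0 := by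
    intro h0
    obtain ⟨u, hu, hune⟩ := Submodule.exists_mem_ne_zero_of_ne_bot hne
    have := congrArg (fun (f : subRep V U hU ⟶ V) => f.hom ⟨u, hu⟩) h0
    simp only [Action.zero_hom] at this
    exact hune this
  have hiso : IsIso (subRepHom V U hU) := (Simple.mono_isIso_iff_nonzero _).mpr hnz
  have hsurj : Function.Surjective ((subRepHom V U hU).hom) := by
    intro v
    refine ⟨(inv (subRepHom V U hU)).hom v, ?_⟩
    have h2 := congrArg (fun (f : V ⟶ V) => f.hom v) (IsIso.inv_hom_id (subRepHom V U hU))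
    simp only [Action.comp_hom, Action.id_hom] at h2
    exact h2
  rw [Submodule.eq_top_iff']
  intro v
  obtain ⟨u, rfl⟩ := hsurj v
  exact (show ↥U from u).2
theorem stmt6 (G : Type) [Group G] [Fintype G]
    (F : Subgroup G) (hFnorm : F.Normal) (hFnil : Group.IsNilpotent F)
    (hFmax : ∀ N : Subgroup G, N.Normal → Group.IsNilpotent N → N ≤ F)
    (p : ℕ) (hp : p.Prime) [Fact p.Prime] (P : Sylow p G)
    (x : G) (hxF : x ∈ F) (hxP : x ∈ P.1) (hxZ : ∀ y ∈ P.1, x * y = y * x) :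
    ∀ V : FDRep ℂ G, Simple V → V.character x ≠ 0 := by
  classical
  obtain ⟨A, hAnorm, hA, hxA⟩ :=
    abelian_normal_exists G F hFnorm hFnil p hp P x hxF hxP hxZ
  haveI := hAnorm
  obtain ⟨k, hk⟩ := P.2 ⟨x, hxP⟩
  have hxm : x ^ p ^ k = 1 := by simpa using congrArg Subtype.val hk
  set m := p ^ k with hm
  intro V hS
  haveI := hS
  set xA : A := ⟨x, hxA⟩ with hxAdef
  -- the representation is nonzero
  have hV0 : finrank ℂ V ≠ 0 := by
    intro h0
    have hsub := Module.finrank_zero_iff (R := ℂ) (M := V) |>.mp h0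
    apply id_nonzero V
    apply Action.hom_ext
    apply ConcreteCategory.hom_ext
    intro v
    exact @Subsingleton.elim _ hsub _ _
  -- a nonzero weight space exists
  have hex : ∃ lam : A → ℂ, wtSpace V A lam ≠ ⊥ := by
    by_contra hcon
    push_neg at hcon
    have := wtSpace_span V A hA
    rw [iSup_congr hcon] at this
    simp only [iSup_bot] at this
    have : finrank ℂ V = 0 := by
      rw [← finrank_top ℂ V, ← this]
      simp
    exact hV0 this
  obtain ⟨lam, hlam⟩ := hex
  -- the G-orbit of lam
  set w : G → (A → ℂ) := fun g => wtConj A lam g⁻¹ with hw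
  have hw1 : w 1 = lam := by rw [hw]; simp [wtConj_one]
  -- mapping lemmas
  have hle1 : ∀ g : G, (wtSpace V A lam).map (rhoEnd V g) ≤ wtSpace V A (w g⁻¹) := by
    intro g
    have h1 : w g⁻¹ = wtConj A lam g := by rw [hw]; simp
    rw [h1]
    exact wtSpace_map_le V A lam g
  have hle2 : ∀ g : G, (wtSpace V A (w g)).map (rhoEnd V g) ≤ wtSpace V A lam := by
    intro g
    have h2 : wtConj A (w g) g = lam := by
      have hwg : w g = wtConj A lam g⁻¹ := rfl
      rw [hwg, wtConj_wtConj, mul_inv_cancel, wtConj_one]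
    have := wtSpace_map_le V A (w g) g
    rwa [h2] at this
  have hmapback : ∀ (q : Submodule ℂ V) (g : G), (q.map (rhoEnd V g)).map (rhoEnd V g⁻¹) = q := by
    intro q g
    rw [← Submodule.map_comp]
    have : (rhoEnd V g⁻¹).comp (rhoEnd V g) = rhoEnd V (g⁻¹ * g) := by
      rw [rhoEnd_mul]; rfl
    rw [this]
    simp only [inv_mul_cancel, rhoEnd_one]
    exact Submodule.map_id q
  -- dimensions are constant along the orbit
  have hdim : ∀ g : G, finrank ℂ (wtSpace V A (w g)) = finrank ℂ (wtSpace V A lam) := by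
    intro g
    apply le_antisymm
    · calc finrank ℂ (wtSpace V A (w g))
          = finrank ℂ ((wtSpace V A (w g)).map (rhoEnd V g) |>.map (rhoEnd V g⁻¹)) := by
            rw [hmapback]
        _ ≤ finrank ℂ ((wtSpace V A (w g)).map (rhoEnd V g)) := Submodule.finrank_map_le _ _
        _ ≤ finrank ℂ (wtSpace V A lam) := Submodule.finrank_mono (hle2 g)
    · have hb := hmapback (wtSpace V A lam) g⁻¹
      rw [inv_inv] at hb
      calc finrank ℂ (wtSpace V A lam)
          = finrank ℂ ((wtSpace V A lam).map (rhoEnd V g⁻¹) |>.map (rhoEnd V g)) := by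
            rw [hb]
        _ ≤ finrank ℂ ((wtSpace V A lam).map (rhoEnd V g⁻¹)) := Submodule.finrank_map_le _ _
        _ ≤ finrank ℂ (wtSpace V A (w g)) := by
            apply Submodule.finrank_mono
            have := hle1 g⁻¹
            rwa [inv_inv] at this
  have hlamrank : finrank ℂ (wtSpace V A lam) ≠ 0 := by
    intro h0
    exact hlam (Submodule.finrank_eq_zero.mp h0)
  have hEne : ∀ g : G, wtSpace V A (w g) ≠ ⊥ := by
    intro g h0
    apply hlamrank
    rw [← hdim g, h0]
    simp
  -- Clifford: the orbit weight spaces span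
  set U : Submodule ℂ V := ⨆ g : G, (wtSpace V A lam).map (rhoEnd V g) with hU
  have hUinv : ∀ g : G, ∀ u ∈ U, V.ρ g u ∈ U := by
    intro g u hu
    have hmap : U.map (rhoEnd V g) ≤ U := by
      rw [hU, Submodule.map_iSup]
      apply iSup_le
      intro h
      rw [← Submodule.map_comp]
      have : (rhoEnd V g).comp (rhoEnd V h) = rhoEnd V (g * h) := by
        rw [rhoEnd_mul]; rfl
      rw [this]
      exact le_iSup_of_le (g * h) le_rfl
    exact hmap ⟨u, hu, rfl⟩
  have hUne : U ≠ ⊥ := by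
    intro h0
    apply hlam
    rw [← le_bot_iff, ← h0, hU]
    refine le_trans ?_ (le_iSup (fun g : G => (wtSpace V A lam).map (rhoEnd V g)) 1)
    rw [rhoEnd_one]
    exact le_of_eq (Submodule.map_id _).symm
  have hUtop : U = ⊤ := subRep_eq_top V U hUinv hUne
  -- the orbit as a finset
  set O : Finset (A → ℂ) := Finset.image w Finset.univ with hO
  have hOsup : ⨆ χ : ↥O, wtSpace V A (χ : A → ℂ) = ⊤ := by
    apply le_antisymm le_top
    rw [← hUtop, hU]
    apply iSup_le
    intro g
    refine le_trans (hle1 g) ?_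
    exact le_iSup (fun χ : ↥O => wtSpace V A (χ : A → ℂ))
      ⟨w g⁻¹, Finset.mem_image_of_mem w (Finset.mem_univ g⁻¹)⟩
  have hOind : iSupIndep (fun χ : ↥O => wtSpace V A (χ : A → ℂ)) :=
    (wtSpace_indep V A hA).comp Subtype.val_injective
  have hinternal : DirectSum.IsInternal (fun χ : ↥O => wtSpace V A (χ : A → ℂ)) :=
    (DirectSum.isInternal_submodule_iff_iSupIndep_and_iSup_eq_top _).mpr ⟨hOind, hOsup⟩
  -- trace formula
  have hchar : V.character x =
      ∑ χ : ↥O, (χ : A → ℂ) xA * (finrank ℂ (wtSpace V A (χ : A → ℂ)) : ℂ) := by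
    have htr := LinearMap.trace_eq_sum_trace_restrict hinternal
      (f := rhoEnd V x) (fun χ : ↥O => wtSpace_mapsTo V A (χ : A → ℂ) xA hA)
    have : V.character x = LinearMap.trace ℂ V (rhoEnd V x) := rfl
    rw [this, htr]
    exact Finset.sum_congr rfl fun χ _ => wtSpace_trace_restrict V A (χ : A → ℂ) xA hA
  -- rewrite with constant dimension
  set d : ℕ := finrank ℂ (wtSpace V A lam) with hd
  have hchar2 : V.character x = (d : ℂ) * ∑ χ ∈ O, χ xA := by
    rw [hchar, Finset.mul_sum, ← Finset.sum_coe_sort O (fun χ => (d:ℂ) * χ xA)]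
    apply Finset.sum_congr rfl
    intro χ _
    obtain ⟨g, -, hg⟩ := Finset.mem_image.mp χ.2
    rw [← hg, hdim g, mul_comm]
  -- key conjugation identity
  have hkey : ∀ g h : G, w (g * h) = wtConj A (w g) h⁻¹ := by
    intro g h
    have h1 : w (g * h) = wtConj A lam ((g * h)⁻¹) := rfl
    have h2 : w g = wtConj A lam g⁻¹ := rfl
    rw [h1, h2, wtConj_wtConj, mul_inv_rev]
  -- fibers of w all have the same cardinality
  set t : ℕ := (Finset.univ.filter fun g : G => w g = lam).card with ht
  have htpos : 0 < t := by
    rw [ht]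
    apply Finset.card_pos.mpr
    exact ⟨1, Finset.mem_filter.mpr ⟨Finset.mem_univ 1, hw1⟩⟩
  have hwfib : ∀ χ ∈ O, (Finset.univ.filter fun g : G => w g = χ).card = t := by
    intro χ hχ
    obtain ⟨h0, -, hh0⟩ := Finset.mem_image.mp hχ
    rw [ht]
    apply Finset.card_bij' (fun g _ => g * h0⁻¹) (fun g _ => g * h0)
    · intro g hg
      rw [Finset.mem_filter] at hg ⊢
      refine ⟨Finset.mem_univ _, ?_⟩
      rw [hkey, inv_inv, hg.2, ← hh0]
      rw [show w h0 = wtConj A lam h0⁻¹ from rfl, wtConj_wtConj, mul_inv_cancel, wtConj_one]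
    · intro g hg
      rw [Finset.mem_filter] at hg ⊢
      refine ⟨Finset.mem_univ _, ?_⟩
      rw [hkey, hg.2, ← hh0]
    · intro g _
      group
    · intro g _
      group
  have hsum1 : ∑ g : G, (w g) xA = t • ∑ χ ∈ O, χ xA := by
    rw [Finset.sum_comp (fun χ : A → ℂ => χ xA) w, Finset.smul_sum]
    exact Finset.sum_congr rfl fun χ hχ => by rw [hwfib χ hχ]
  -- group the sum over cosets of P
  haveI : Fintype (G ⧸ P.1) := Fintype.ofFinite _
  set vv : G ⧸ P.1 → ℂ := fun c => (w (Quotient.out c)) xA with hvv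
  have hconst : ∀ g : G, (w g) xA = vv (QuotientGroup.mk g) := by
    intro g
    obtain ⟨y, hy⟩ := QuotientGroup.mk_out_eq_mul P.1 g
    rw [hvv]
    show (w g) xA = (w (Quotient.out ((QuotientGroup.mk g) : G ⧸ P.1))) xA
    rw [hy, hkey]
    show (w g) xA = (w g) ⟨((y : G)⁻¹)⁻¹ * x * (y : G)⁻¹, _⟩
    congr 1
    apply Subtype.ext
    show x = ((y : G)⁻¹)⁻¹ * x * (y : G)⁻¹
    rw [inv_inv, ← hxZ (y : G) y.2, mul_assoc, mul_inv_cancel, mul_one]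
  set cardP : ℕ := Fintype.card P.1 with hcardP
  have hfibq : ∀ c : G ⧸ P.1, (Finset.univ.filter fun g : G => (QuotientGroup.mk g : G ⧸ P.1) = c).card = cardP := by
    intro c
    rw [hcardP, ← Finset.card_univ]
    apply Finset.card_bij' (fun g hg => (⟨(Quotient.out c)⁻¹ * g, by
        rw [Finset.mem_filter] at hg
        have : ((Quotient.out c : G) : G ⧸ P.1) = (g : G ⧸ P.1) := by
          rw [QuotientGroup.out_eq']
          exact hg.2.symm
        exact QuotientGroup.eq.mp this⟩ : P.1))
      (fun q _ => Quotient.out c * (q : G))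
    case hi => intro g hg; exact Finset.mem_univ _
    case hj =>
      intro q _
      rw [Finset.mem_filter]
      refine ⟨Finset.mem_univ _, ?_⟩
      have h5 : ((Quotient.out c * (q : G) : G) : G ⧸ P.1) = ((Quotient.out c : G) : G ⧸ P.1) := by
        symm
        apply (QuotientGroup.eq).mpr
        have h6 : (Quotient.out c)⁻¹ * (Quotient.out c * (q : G)) = (q : G) := by group
        rw [h6]
        exact q.2
      rw [h5, QuotientGroup.out_eq']
    case left_inv =>
      intro g hg
      simp [mul_assoc]
    case right_inv =>
      intro q hq
      apply Subtype.ext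
      simp
  have hsum2 : ∑ g : G, (w g) xA = cardP • ∑ c : G ⧸ P.1, vv c := by
    calc ∑ g : G, (w g) xA = ∑ g : G, vv (QuotientGroup.mk g) :=
          Finset.sum_congr rfl fun g _ => hconst g
      _ = ∑ c ∈ Finset.image (fun g : G => (QuotientGroup.mk g : G ⧸ P.1)) Finset.univ,
            (Finset.univ.filter fun g : G => (QuotientGroup.mk g : G ⧸ P.1) = c).card • vv c :=
          Finset.sum_comp vv (QuotientGroup.mk)
      _ = ∑ c : G ⧸ P.1, (Finset.univ.filter fun g : G => (QuotientGroup.mk g : G ⧸ P.1) = c).card • vv c := by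
          rw [Finset.image_univ_of_surjective (QuotientGroup.mk_surjective)]
      _ = cardP • ∑ c : G ⧸ P.1, vv c := by
          rw [Finset.smul_sum]
          exact Finset.sum_congr rfl fun c _ => by rw [hfibq c]
  -- the coset sum is nonzero
  have hroots : ∀ c : G ⧸ P.1, (vv c) ^ m = 1 := by
    intro c
    exact wtSpace_val_pow V A (w (Quotient.out c)) (hEne _) xA m hxm
  have hindex : ¬ (p : ℕ) ∣ Fintype.card (G ⧸ P.1) := by
    have h1 := P.not_dvd_index
    rwa [Subgroup.index_eq_card, Nat.card_eq_fintype_card] at h1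
  have hS0 : ∑ c : G ⧸ P.1, vv c ≠ 0 := by
    apply sum_prime_pow_roots_ne_zero hp Finset.univ vv (fun c _ => hroots c)
    rwa [Finset.card_univ]
  -- conclude
  have hcardPpos : 0 < cardP := Fintype.card_pos
  have hSx0 : (∑ χ ∈ O, χ xA) ≠ 0 := by
    intro h0
    rw [h0, smul_zero] at hsum1
    rw [hsum1] at hsum2
    have : (cardP : ℂ) * ∑ c : G ⧸ P.1, vv c = 0 := by
      rw [← nsmul_eq_mul]
      exact hsum2.symm
    rcases mul_eq_zero.mp this with h | h
    · exact (Nat.cast_ne_zero.mpr hcardPpos.ne') h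
    · exact hS0 h
  rw [hchar2]
  apply mul_ne_zero _ hSx0
  exact_mod_cast hlamrank
end

section
/- Let G be a finite group, A ⊴ G abelian, P a Sylow p-subgroup of G, x ∈ A ∩ Z(P), and ζ ∈ Irr(A) with inertia group I = I_G(ζ). Then for any g ∈ G and y ∈ P, ζ^(gy)(x) = ζ^g(x); consequently, for each complex value ξ, the number of cosets I g_i in a transversal of I in G with ζ^(g_i)(x) = ξ is divisible by the p-part of |G : I|. -/
open CategoryTheory

private lemma aux_orbit_dvd {α M : Type*} [Group M] [MulAction M α] [Fintype α]
    (d : ℕ) (hd : ∀ a : α, d ∣ Nat.card (MulAction.orbit M a)) :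
    ∀ s : Finset α, (∀ (m : M) (a : α), a ∈ s → m • a ∈ s) → d ∣ s.card := by
  classical
  intro s
  induction s using Finset.strongInduction with
  | _ s ih =>
    intro hs
    rcases s.eq_empty_or_nonempty with rfl | ⟨a, ha⟩
    · simp
    · have hfin : (MulAction.orbit M a).Finite := Set.toFinite _
      set o : Finset α := hfin.toFinset with ho
      have hmem : ∀ b, b ∈ o ↔ b ∈ MulAction.orbit M a := fun b => hfin.mem_toFinset
      have hoS : o ⊆ s := by
        intro b hb
        rw [hmem] at hb
        obtain ⟨m, rfl⟩ := hb
        exact hs m a ha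
      have hao : a ∈ o := (hmem a).2 (MulAction.mem_orbit_self a)
      have hss : s \ o ⊂ s := Finset.sdiff_ssubset hoS ⟨a, hao⟩
      have hinv : ∀ (m : M) (b : α), b ∈ s \ o → m • b ∈ s \ o := by
        intro m b hb
        rw [Finset.mem_sdiff] at hb ⊢
        refine ⟨hs m b hb.1, fun hmb => hb.2 ?_⟩
        rw [hmem] at hmb ⊢
        obtain ⟨m', hm'⟩ := hmb
        exact ⟨m⁻¹ * m', by simp only [mul_smul]; rw [show m' • a = m • b from hm']; simp⟩
      have h1 : d ∣ o.card := by
        have h1' : o.card = Nat.card (MulAction.orbit M a) := by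
          rw [ho, Set.Finite.card_toFinset, Nat.card_eq_fintype_card]
        rw [h1']; exact hd a
      have h2 := ih (s \ o) hss hinv
      have h3 : s.card = o.card + (s \ o).card := by
        rw [Finset.card_sdiff_of_subset hoS]
        have := Finset.card_le_card hoS
        omega
      rw [h3]
      exact Nat.dvd_add h1 h2


/-- for `A ⊴ G` abelian, `P` a Sylow `p`-subgroup,
`x ∈ A ∩ Z(P)` and `ζ ∈ Irr(A)` with inertia group `I`:
`ζ^(gy)(x) = ζ^g(x)` for all `g ∈ G`, `y ∈ P`; consequently for each value
`ξ ∈ ℂ`, the number of elements `t` of a (right) transversal `T` of `I` in `G`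
with `ζ^t(x) = ξ` is divisible by the `p`-part of `|G : I|`. -/
theorem stmt9 (G : Type) [Group G] [Fintype G] (A : Subgroup G) (hA : A.Normal)
    (hAab : ∀ u ∈ A, ∀ v ∈ A, u * v = v * u)
    (p : ℕ) (hp : p.Prime) [Fact p.Prime] (P : Sylow p G)
    (x : G) (hx : x ∈ A) (hxP : x ∈ P.1) (hxZ : ∀ y ∈ P.1, x * y = y * x)
    (V : FDRep ℂ ↥A) (hV : Simple V) (I : Subgroup G)
    (hI : ∀ g : G, g ∈ I ↔ ∀ a : ↥A,
      V.character ⟨g * ↑a * g⁻¹, hA.conj_mem _ a.2 g⟩ = V.character a) :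
    (∀ g : G, ∀ y ∈ P.1,
      V.character ⟨(g * y) * x * (g * y)⁻¹, hA.conj_mem _ hx (g * y)⟩ =
        V.character ⟨g * x * g⁻¹, hA.conj_mem _ hx g⟩) ∧
    ∀ T : Finset G, Subgroup.IsComplement (I : Set G) (T : Set G) →
      ∀ ξ : ℂ, p ^ (I.index.factorization p) ∣
        (T.filter (fun t =>
          V.character ⟨t * x * t⁻¹, hA.conj_mem _ hx t⟩ = ξ)).card := by
  classical
  have hxy : ∀ y ∈ P.1, y * x * y⁻¹ = x := by
    intro y hy
    rw [← hxZ y hy]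
    group
  have hxy' : ∀ y ∈ P.1, y⁻¹ * x * y = x := by
    intro y hy
    calc y⁻¹ * x * y = y⁻¹ * (x * y) := by group
      _ = y⁻¹ * (y * x) := by rw [hxZ y hy]
      _ = x := by group
  constructor
  · intro g y hy
    have h1 : (g * y) * x * (g * y)⁻¹ = g * x * g⁻¹ := by
      rw [mul_inv_rev]
      calc g * y * x * (y⁻¹ * g⁻¹) = g * (y * x * y⁻¹) * g⁻¹ := by group
        _ = g * x * g⁻¹ := by rw [hxy y hy]
    exact congrArg V.character (Subtype.ext h1)
  · intro T hT ξ
    have hmemA : ∀ g : G, g⁻¹ * x * g ∈ A := fun g => by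
      have := hA.conj_mem x hx g⁻¹
      simpa using this
    set Φ : G → ℂ := fun g => V.character ⟨g⁻¹ * x * g, hmemA g⟩ with hΦ
    -- Φ depends only on the right coset, i.e. on ↑g : G ⧸ I ... (left coset of g⁻¹)
    have hΦwd : ∀ g g' : G, (g : G ⧸ I) = (g' : G ⧸ I) → Φ g = Φ g' := by
      intro g g' h
      rw [QuotientGroup.eq] at h
      set i := g⁻¹ * g' with hi
      have hg' : g' = g * i := by rw [hi]; group
      have e1 : g'⁻¹ * x * g' = i⁻¹ * (g⁻¹ * x * g) * i⁻¹⁻¹ := by rw [hg']; group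
      have h2 : Φ g' = V.character ⟨i⁻¹ * (g⁻¹ * x * g) * i⁻¹⁻¹,
          hA.conj_mem _ (hmemA g) i⁻¹⟩ := congrArg V.character (Subtype.ext e1)
      rw [h2]
      exact ((hI i⁻¹).mp (inv_mem h) ⟨g⁻¹ * x * g, hmemA g⟩).symm
    haveI : Fintype (G ⧸ I) := Fintype.ofFinite _
    set f : G ⧸ I → ℂ := fun c => Φ c.out with hfdef
    have hf : ∀ g : G, f (↑g) = Φ g := fun g => hΦwd _ g (QuotientGroup.out_eq' _)
    have hfinv : ∀ (y : ↥P.1) (c : G ⧸ I), f (y • c) = f c := by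
      intro y c
      obtain ⟨g, rfl⟩ := QuotientGroup.mk_surjective c
      have hsm : y • ((g : G ⧸ I)) = (((y : G) * g : G) : G ⧸ I) := rfl
      rw [hsm, hf, hf]
      refine congrArg V.character (Subtype.ext ?_)
      calc ((y:G) * g)⁻¹ * x * ((y:G) * g) = g⁻¹ * ((y:G)⁻¹ * x * (y:G)) * g := by group
        _ = g⁻¹ * x * g := by rw [hxy' _ y.2]
    -- key orbit divisibility
    have horb : ∀ c : G ⧸ I, p ^ (I.index.factorization p) ∣
        Nat.card (MulAction.orbit ↥P.1 c) := by
      intro c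
      obtain ⟨g, rfl⟩ := QuotientGroup.mk_surjective c
      set S := MulAction.stabilizer ↥P.1 ((g : G ⧸ I)) with hS
      have hcardP : Nat.card ↥P.1 = p ^ (Nat.card G).factorization p :=
        P.card_eq_multiplicity
      obtain ⟨k, hk, hcardS⟩ : ∃ k ≤ (Nat.card G).factorization p,
          Nat.card S = p ^ k := by
        have h2 : Nat.card S ∣ Nat.card ↥P.1 := Subgroup.card_subgroup_dvd_card S
        rw [hcardP] at h2
        obtain ⟨k, hk, hck⟩ := (Nat.dvd_prime_pow hp).mp h2
        exact ⟨k, hk, hck⟩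
      -- map S into I
      set φ : ↥P.1 →* G := ((MulAut.conj g⁻¹).toMonoidHom).comp P.1.subtype with hφ
      have hφinj : Function.Injective φ :=
        (MulAut.conj g⁻¹).injective.comp (Subgroup.subtype_injective P.1)
      have hKI : S.map φ ≤ I := by
        rintro z ⟨y, hy, rfl⟩
        have hy' : (y : ↥P.1) • ((g : G ⧸ I)) = (g : G ⧸ I) := hy
        have h3 : ((((y : G)) * g : G) : G ⧸ I) = (g : G ⧸ I) := hy'
        have h4 : ((y:G) * g)⁻¹ * g ∈ I := QuotientGroup.eq.mp h3
        have h5 : φ y = (((y:G) * g)⁻¹ * g)⁻¹ := by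
          simp [hφ, MulAut.conj_apply]
          group
        rw [h5]
        exact inv_mem h4
      have hcardK : Nat.card (S.map φ) = p ^ k := by
        rw [← hcardS]
        exact (Nat.card_congr (S.equivMapOfInjective φ hφinj).toEquiv).symm
      have h6 : p ^ k ∣ Nat.card ↥I := by
        rw [← hcardK]
        exact Subgroup.card_dvd_of_le hKI
      have hkI : k ≤ (Nat.card ↥I).factorization p :=
        (Nat.Prime.pow_dvd_iff_le_factorization hp Nat.card_pos.ne').mp h6
      have hGfact : (Nat.card G).factorization p =
          I.index.factorization p + (Nat.card ↥I).factorization p := by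
        have h7 : I.index * Nat.card ↥I = Nat.card G := I.index_mul_card
        rw [← h7, Nat.factorization_mul I.index_ne_zero_of_finite Nat.card_pos.ne']
        simp
      have h8 : Nat.card (MulAction.orbit ↥P.1 ((g : G ⧸ I))) * Nat.card S
          = Nat.card ↥P.1 := by
        rw [Nat.card_congr (MulAction.orbitEquivQuotientStabilizer ↥P.1 ((g : G ⧸ I)))]
        exact (Subgroup.card_eq_card_quotient_mul_card_subgroup S).symm
      have h9 : p ^ (I.index.factorization p) * Nat.card ↥S ∣
          Nat.card (MulAction.orbit ↥P.1 ((g : G ⧸ I))) * Nat.card ↥S := by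
        rw [h8, hcardP, hcardS, ← pow_add]
        refine pow_dvd_pow p ?_
        rw [hGfact]
        omega
      exact (Nat.mul_dvd_mul_iff_right (by
        rw [hcardS]; exact pow_pos hp.pos k)).mp h9
    -- invariant fiber
    set s : Finset (G ⧸ I) := Finset.univ.filter (fun c => f c = ξ) with hsdef
    have hsinv : ∀ (m : ↥P.1) (c : G ⧸ I), c ∈ s → m • c ∈ s := by
      intro m c hc
      rw [hsdef, Finset.mem_filter] at hc ⊢
      exact ⟨Finset.mem_univ _, by rw [hfinv]; exact hc.2⟩
    have hdvd : p ^ (I.index.factorization p) ∣ s.card :=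
      aux_orbit_dvd _ horb s hsinv
    -- bijection between the filtered transversal and the fiber
    have hcard : (T.filter (fun t =>
        V.character ⟨t * x * t⁻¹, hA.conj_mem _ hx t⟩ = ξ)).card = s.card := by
      apply Finset.card_bij (fun t _ => ((t⁻¹ : G) : G ⧸ I))
      · intro t ht
        rw [Finset.mem_filter] at ht
        rw [hsdef, Finset.mem_filter]
        refine ⟨Finset.mem_univ _, ?_⟩
        rw [hf]
        have e2 : (t⁻¹)⁻¹ * x * t⁻¹ = t * x * t⁻¹ := by group
        rw [show Φ t⁻¹ = V.character ⟨t * x * t⁻¹, hA.conj_mem _ hx t⟩ from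
          congrArg V.character (Subtype.ext e2)]
        exact ht.2
      · intro t ht t' ht' hEq
        have h := QuotientGroup.eq.mp hEq
        rw [inv_inv] at h
        have hu := (Subgroup.isComplement_iff_existsUnique.mp hT) t
        set z1 : ↥(I : Set G) × ↥(T : Set G) :=
          ⟨⟨t * t'⁻¹, h⟩, ⟨t', Finset.mem_coe.mpr (Finset.mem_filter.mp ht').1⟩⟩ with hz1
        set z2 : ↥(I : Set G) × ↥(T : Set G) :=
          ⟨⟨1, SetLike.mem_coe.mpr (one_mem I)⟩,
            ⟨t, Finset.mem_coe.mpr (Finset.mem_filter.mp ht).1⟩⟩ with hz2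
        have e1 : (z1.1 : G) * (z1.2 : G) = t := by
          show t * t'⁻¹ * t' = t; group
        have e2 : (z2.1 : G) * (z2.2 : G) = t := by
          show (1 : G) * t = t; group
        have h11 := hu.unique e1 e2
        have h12 := congrArg (fun z : ↥(I : Set G) × ↥(T : Set G) => (z.2 : G)) h11
        exact (by simpa [hz1, hz2] using h12 : t' = t).symm
      · intro c hc
        obtain ⟨g, rfl⟩ := QuotientGroup.mk_surjective c
        obtain ⟨⟨⟨i, hiI⟩, ⟨t, htT⟩⟩, heq, -⟩ :=
          (Subgroup.isComplement_iff_existsUnique.mp hT) g⁻¹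
        simp only at heq
        have h10 : ((t⁻¹ : G) : G ⧸ I) = (g : G ⧸ I) := by
          rw [QuotientGroup.eq, inv_inv]
          have htg : t * g = i⁻¹ := by
            have : t = i⁻¹ * g⁻¹ := by rw [← heq]; group
            rw [this]; group
          rw [htg]
          exact inv_mem hiI
        refine ⟨t, ?_, h10⟩
        rw [Finset.mem_filter]
        refine ⟨Finset.mem_coe.mp htT, ?_⟩
        rw [hsdef, Finset.mem_filter] at hc
        have hfc : f ((g : G ⧸ I)) = ξ := hc.2
        rw [← h10, hf] at hfc
        have e2 : (t⁻¹)⁻¹ * x * t⁻¹ = t * x * t⁻¹ := by group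
        rw [← hfc]
        exact congrArg V.character (Subtype.ext e2.symm)
    rw [hcard]
    exact hdvd
end

section
/- Let G be a finite group with a normal Sylow p-subgroup P. Then every element of Z(P) is non-vanishing in G, i.e., χ(z) ≠ 0 for all χ ∈ Irr(G) and z ∈ Z(P). -/
open CategoryTheory

/-- A finite commuting family of endomorphisms of a nonzero finite-dimensional complex vector
space has a common eigenvector. -/
lemma aux_common_eigenvector :
    ∀ (n : ℕ) (V : Type) [AddCommGroup V] [Module ℂ V],
    ∀ [FiniteDimensional ℂ V] [Nontrivial V],
    ∀ (s : Finset (Module.End ℂ V)), s.card ≤ n →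
      (∀ f ∈ s, ∀ g ∈ s, Commute f g) →
      ∃ v : V, v ≠ 0 ∧ ∃ μ : Module.End ℂ V → ℂ, ∀ f ∈ s, f v = μ f • v := by
  intro n
  induction n with
  | zero =>
    intro V _ _ _ _ s hs _
    obtain ⟨v, hv⟩ := exists_ne (0 : V)
    have : s = ∅ := Finset.card_eq_zero.mp (Nat.le_zero.mp hs)
    subst this
    exact ⟨v, hv, fun _ => 0, by simp⟩
  | succ n ih =>
    intro V _ _ _ _ s hs hcomm
    classical
    rcases eq_or_ne s ∅ with rfl | hne
    · obtain ⟨v, hv⟩ := exists_ne (0 : V)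
      exact ⟨v, hv, fun _ => 0, by simp⟩
    obtain ⟨f, hf⟩ := Finset.nonempty_of_ne_empty hne
    obtain ⟨μ₀, hμ₀⟩ := Module.End.exists_eigenvalue f
    obtain ⟨w, hw⟩ := hμ₀.exists_hasEigenvector
    set E := Module.End.eigenspace f μ₀ with hE
    haveI : Nontrivial E :=
      Submodule.nontrivial_iff_ne_bot.mpr (Submodule.ne_bot_iff _ |>.mpr ⟨w, hw.1, hw.2⟩)
    have hmaps : ∀ g ∈ s, ∀ x ∈ E, g x ∈ E := by
      intro g hg x hx
      have hx' : f x = μ₀ • x := Module.End.mem_eigenspace_iff.mp hx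
      have : f (g x) = μ₀ • (g x) := by
        have hcfg : f * g = g * f := (hcomm f hf g hg).eq
        calc f (g x) = (f * g) x := rfl
          _ = (g * f) x := by rw [hcfg]
          _ = g (f x) := rfl
          _ = μ₀ • g x := by rw [hx', map_smul]
      exact Module.End.mem_eigenspace_iff.mpr this
    set t := s.erase f with ht
    have hmem : ∀ x ∈ t, x ∈ s := fun x hx => Finset.mem_of_mem_erase hx
    set t' : Finset (Module.End ℂ E) :=
      t.attach.image (fun x => LinearMap.restrict x.1 (hmaps x.1 (hmem x.1 x.2))) with ht'
    have htcard : t'.card ≤ n := by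
      calc t'.card ≤ t.attach.card := Finset.card_image_le
        _ = t.card := Finset.card_attach
        _ ≤ n := by
          rw [ht]
          have h1 := Finset.card_erase_of_mem hf
          have h2 : 0 < s.card := Finset.card_pos.mpr ⟨f, hf⟩
          omega
    have ht'comm : ∀ a ∈ t', ∀ b ∈ t', Commute a b := by
      intro a ha b hb
      obtain ⟨⟨x, hx⟩, -, rfl⟩ := Finset.mem_image.mp ha
      obtain ⟨⟨y, hy⟩, -, rfl⟩ := Finset.mem_image.mp hb
      have hxy : x * y = y * x := (hcomm x (hmem x hx) y (hmem y hy)).eq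
      show _ = _
      ext ⟨v, hv⟩
      have : x (y v) = y (x v) := by
        have := congrArg (fun (u : Module.End ℂ V) => u v) hxy
        simpa using this
      simpa [LinearMap.restrict_apply, Subtype.ext_iff] using this
    obtain ⟨v', hv'0, μ', hμ'⟩ := ih E t' htcard ht'comm
    refine ⟨(v' : V), by simpa using hv'0, ?_⟩
    refine ⟨fun g => if hg : g ∈ t then
        μ' (LinearMap.restrict g (hmaps g (hmem g hg))) else μ₀, ?_⟩
    intro g hg
    by_cases hgt : g ∈ t
    · have hmemt' : LinearMap.restrict g (hmaps g (hmem g hgt)) ∈ t' :=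
        Finset.mem_image.mpr ⟨⟨g, hgt⟩, Finset.mem_attach _ _, rfl⟩
      have := hμ' _ hmemt'
      have := congrArg (Subtype.val) this
      simpa [LinearMap.restrict_apply, hgt] using this
    · have hgf : g = f := by
        by_contra hne'
        exact hgt (Finset.mem_erase.mpr ⟨hne', hg⟩)
      subst hgf
      have : g (v' : V) = μ₀ • (v' : V) := Module.End.mem_eigenspace_iff.mp v'.2
      simpa [hgt] using this

open Module in
/-- if the finite group `G` has a normal Sylow `p`-subgroup `P`,
then every element of `Z(P)` is non-vanishing in `G`. -/
theorem stmt11 (G : Type) [Group G] [Fintype G]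
    (p : ℕ) (hp : p.Prime) [Fact p.Prime] (P : Sylow p G) (hP : P.1.Normal)
    (z : G) (hzP : z ∈ P.1) (hzZ : ∀ y ∈ P.1, z * y = y * z) :
    ∀ V : FDRep ℂ G, Simple V → V.character z ≠ 0 := by
  classical
  intro V hsimple hzero
  haveI := hsimple
  -- the representation space is nontrivial
  haveI hVnt : Nontrivial V := by
    by_contra h
    rw [not_nontrivial_iff_subsingleton] at h
    exact CategoryTheory.id_nonzero V
      (Action.Hom.ext (by ext v; exact @Subsingleton.elim _ h _ _))
  have hn : (finrank ℂ V : ℂ) ≠ 0 := Nat.cast_ne_zero.mpr finrank_pos.ne'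
  -- z ≠ 1
  by_cases hz1 : z = 1
  · subst hz1
    rw [FDRep.char_one] at hzero
    exact hn hzero
  -- the conjugacy class of z, as a Finset
  set S : Finset G := Finset.image (fun g => g * z * g⁻¹) Finset.univ with hS
  have hzS : z ∈ S := Finset.mem_image.mpr ⟨1, Finset.mem_univ _, by group⟩
  have hSP : ∀ x ∈ S, x ∈ P.1 := by
    intro x hx
    obtain ⟨g, -, rfl⟩ := Finset.mem_image.mp hx
    exact hP.conj_mem z hzP g
  -- every element of S commutes with every element of P
  have hSZ : ∀ x ∈ S, ∀ y ∈ P.1, x * y = y * x := by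
    intro x hx y hy
    obtain ⟨g, -, rfl⟩ := Finset.mem_image.mp hx
    have hy' : g⁻¹ * y * g ∈ P.1 := by
      have := hP.conj_mem y hy g⁻¹
      simpa using this
    have := hzZ _ hy'
    have := congrArg (fun w => g * w * g⁻¹) this
    calc g * z * g⁻¹ * y = g * (z * (g⁻¹ * y * g)) * g⁻¹ := by group
      _ = g * ((g⁻¹ * y * g) * z) * g⁻¹ := by rw [hzZ _ hy']
      _ = y * (g * z * g⁻¹) := by group
  have hScomm : ∀ x ∈ S, ∀ y ∈ S, x * y = y * x := fun x hx y hy =>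
    hSZ x hx y (hSP y hy)
  have hSconj : ∀ (g : G), ∀ x ∈ S, g * x * g⁻¹ ∈ S := by
    intro g x hx
    obtain ⟨h, -, rfl⟩ := Finset.mem_image.mp hx
    refine Finset.mem_image.mpr ⟨g * h, Finset.mem_univ _, by group⟩
  -- the class sum
  set T : Module.End ℂ V := ∑ x ∈ S, V.ρ x with hT
  have hTcomm : ∀ g : G, V.ρ g * T = T * V.ρ g := by
    intro g
    rw [hT, Finset.mul_sum, Finset.sum_mul]
    have step : ∀ x ∈ S, V.ρ g * V.ρ x = V.ρ (g * x * g⁻¹) * V.ρ g := by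
      intro x hx
      rw [← map_mul, ← map_mul]
      congr 1
      group
    rw [Finset.sum_congr rfl step]
    refine Finset.sum_bij' (fun x _ => g * x * g⁻¹) (fun y _ => g⁻¹ * y * g)
      (fun x hx => hSconj g x hx) (fun y hy => by simpa using hSconj g⁻¹ y hy)
      (fun x _ => by group) (fun y _ => by group) (fun x hx => rfl)
  -- package as an equivariant endomorphism, apply Schur's lemma
  let F : V ⟶ V := ⟨FGModuleCat.ofHom T, fun g => by
    ext v; exact congrArg (fun u : Module.End ℂ V => u v) (hTcomm g).symm⟩
  obtain ⟨c, hc⟩ := CategoryTheory.endomorphism_simple_eq_smul_id ℂ F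
  -- trace computation: trace T = |S| * χ(z) = 0
  have htrT : LinearMap.trace ℂ V T = 0 := by
    rw [hT, map_sum]
    have : ∀ x ∈ S, LinearMap.trace ℂ V (V.ρ x) = 0 := by
      intro x hx
      obtain ⟨g, -, rfl⟩ := Finset.mem_image.mp hx
      have := FDRep.char_conj V z g
      rw [show V.character (g * z * g⁻¹) = LinearMap.trace ℂ V (V.ρ (g * z * g⁻¹)) from rfl,
        show V.character z = LinearMap.trace ℂ V (V.ρ z) from rfl] at this
      rw [this]
      exact hzero
    rw [Finset.sum_congr rfl this, Finset.sum_const, smul_zero]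
  -- hence T = 0
  have hThom : T = c • LinearMap.id (R := ℂ) (M := V) := by
    have := congrArg (fun f => f.hom.hom.hom) hc
    exact this.symm
  have hczero : c = 0 := by
    have : LinearMap.trace ℂ V T = c * finrank ℂ V := by
      rw [hThom, map_smul, LinearMap.trace_id, smul_eq_mul]
    rw [htrT] at this
    rcases mul_eq_zero.mp this.symm with h | h
    · exact h
    · exact absurd h hn
  have hT0 : T = 0 := by rw [hThom, hczero, zero_smul]
  -- common eigenvector for the commuting family ρ(S)
  set s' : Finset (Module.End ℂ V) := S.image (fun x => V.ρ x) with hs'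
  have hs'comm : ∀ f ∈ s', ∀ g ∈ s', Commute f g := by
    intro f hf g hg
    obtain ⟨x, hx, rfl⟩ := Finset.mem_image.mp hf
    obtain ⟨y, hy, rfl⟩ := Finset.mem_image.mp hg
    show _ = _
    rw [← map_mul, ← map_mul, hScomm x hx y hy]
  obtain ⟨v, hv0, μ, hμ⟩ := aux_common_eigenvector s'.card V s' le_rfl hs'comm
  have heig : ∀ x ∈ S, V.ρ x v = μ (V.ρ x) • v := fun x hx =>
    hμ _ (Finset.mem_image_of_mem _ hx)
  -- the eigenvalue sum vanishes
  have hsum : ∑ x ∈ S, μ (V.ρ x) = 0 := by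
    have hTv : T v = (∑ x ∈ S, μ (V.ρ x)) • v := by
      rw [hT, LinearMap.sum_apply, Finset.sum_smul]
      exact Finset.sum_congr rfl heig
    rw [hT0] at hTv
    have := hTv.symm
    rw [LinearMap.zero_apply] at this
    rcases smul_eq_zero.mp this with h | h
    · exact h
    · exact absurd h hv0
  -- each eigenvalue is a p-power root of unity
  set N : ℕ := Nat.card P with hN
  have hNpow : N = p ^ (Nat.card G).factorization p := P.card_eq_multiplicity
  have hroot : ∀ x ∈ S, (μ (V.ρ x)) ^ N = 1 := by
    intro x hx
    have hxN : x ^ N = 1 := by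
      have : (⟨x, hSP x hx⟩ : P.1) ^ N = 1 := pow_card_eq_one'
      have := congrArg (Subtype.val) this
      simpa using this
    have hρ : (V.ρ x) ^ N = 1 := by rw [← map_pow, hxN, map_one]
    have hev : Module.End.HasEigenvector (V.ρ x) (μ (V.ρ x)) v :=
      Module.End.hasEigenvector_iff.mpr
        ⟨Module.End.mem_eigenspace_iff.mpr (heig x hx), hv0⟩
    have := hev.pow_apply N
    rw [hρ] at this
    have h1 : (1 : ℂ) • v = (μ (V.ρ x)) ^ N • v := by simpa using this
    have := sub_eq_zero.mpr h1
    rw [← sub_smul] at this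
    rcases smul_eq_zero.mp this with h | h
    · linear_combination -h
    · exact absurd h hv0
  -- N = p^k with k ≥ 1
  have hk1 : 1 ≤ (Nat.card G).factorization p := by
    by_contra hk
    have hk0 : (Nat.card G).factorization p = 0 := by omega
    rw [hk0, pow_zero] at hNpow
    have : orderOf (⟨z, hzP⟩ : P.1) ∣ 1 := hNpow ▸ orderOf_dvd_natCard _
    have : (⟨z, hzP⟩ : P.1) = 1 := orderOf_eq_one_iff.mp (Nat.dvd_one.mp this)
    exact hz1 (by simpa [Subtype.ext_iff] using this)
  have hN0 : N ≠ 0 := by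
    rw [hNpow]; exact pow_ne_zero _ hp.pos.ne'
  haveI : NeZero N := ⟨hN0⟩
  -- p divides |S| via cyclotomic polynomials
  have hpS : (p : ℕ) ∣ S.card := by
    set ζ : ℂ := Complex.exp (2 * Real.pi * Complex.I / N) with hζdef
    have hζ : IsPrimitiveRoot ζ N := Complex.isPrimitiveRoot_exp N hN0
    have hex : ∀ x : G, ∃ i : ℕ, x ∈ S → ζ ^ i = μ (V.ρ x) := by
      intro x
      by_cases hx : x ∈ S
      · obtain ⟨i, -, hi⟩ := hζ.eq_pow_of_pow_eq_one (hroot x hx)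
        exact ⟨i, fun _ => hi⟩
      · exact ⟨0, fun h => absurd h hx⟩
    choose m hm using hex
    set g : Polynomial ℤ := ∑ x ∈ S, Polynomial.X ^ (m x) with hg
    have hgζ : Polynomial.aeval ζ g = 0 := by
      rw [hg, map_sum]
      have : ∀ x ∈ S, Polynomial.aeval ζ (Polynomial.X ^ (m x) : Polynomial ℤ)
          = μ (V.ρ x) := by
        intro x hx
        rw [map_pow, Polynomial.aeval_X]
        exact hm x hx
      rw [Finset.sum_congr rfl this, hsum]
    have hdvd : Polynomial.cyclotomic N ℤ ∣ g := by
      rw [Polynomial.cyclotomic_eq_minpoly hζ (Nat.pos_of_ne_zero hN0)]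
      exact minpoly.isIntegrallyClosed_dvd (hζ.isIntegral (Nat.pos_of_ne_zero hN0)) hgζ
    obtain ⟨h, hh⟩ := hdvd
    have heval : g.eval 1 = S.card := by
      rw [hg, Polynomial.eval_finset_sum]
      simp
    have hcyc1 : (Polynomial.cyclotomic N ℤ).eval 1 = p := by
      obtain ⟨k, hk⟩ : ∃ k, (Nat.card G).factorization p = k + 1 :=
        ⟨(Nat.card G).factorization p - 1, by omega⟩
      rw [hNpow, hk]
      exact Polynomial.eval_one_cyclotomic_prime_pow k
    have : (p : ℤ) ∣ (S.card : ℤ) := by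
      refine ⟨h.eval 1, ?_⟩
      rw [← heval, hh, Polynomial.eval_mul, hcyc1]
    exact_mod_cast Int.ofNat_dvd.mp (by exact_mod_cast this)
  -- but p does not divide |S|, by orbit-stabilizer and Sylow
  have hpS' : ¬ (p : ℕ) ∣ S.card := by
    intro hdvd
    set stab := MulAction.stabilizer (ConjAct G) z with hstab
    have horb : MulAction.orbit (ConjAct G) z = (S : Set G) := by
      ext x
      simp only [MulAction.mem_orbit_iff, hS, Finset.coe_image, Finset.coe_univ,
        Set.image_univ, Set.mem_range]
      constructor
      · rintro ⟨g, rfl⟩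
        exact ⟨ConjAct.ofConjAct g, (ConjAct.smul_def g z).symm⟩
      · rintro ⟨g, rfl⟩
        exact ⟨ConjAct.toConjAct g, ConjAct.toConjAct_smul g z⟩
    have h1 : Nat.card (MulAction.orbit (ConjAct G) z) = S.card := by
      rw [horb]
      simp [Nat.card_coe_set_eq]
    have h2 : Nat.card (MulAction.orbit (ConjAct G) z) * Nat.card stab
        = Nat.card (ConjAct G) := by
      rw [Nat.card_congr (MulAction.orbitEquivQuotientStabilizer (ConjAct G) z),
        ← Subgroup.index_eq_card]
      exact Subgroup.index_mul_card stab
    have hPstab : Subgroup.map (ConjAct.toConjAct (G := G)).toMonoidHom P.1 ≤ stab := by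
      rintro x hx
      obtain ⟨y, hy, rfl⟩ := hx
      rw [MulAction.mem_stabilizer_iff]
      simp only [MulEquiv.coe_toMonoidHom]
      rw [ConjAct.toConjAct_smul, mul_inv_eq_iff_eq_mul]
      exact (hzZ y hy).symm
    have h3 : Nat.card P.1 ∣ Nat.card stab := by
      have hcards : Nat.card (Subgroup.map (ConjAct.toConjAct (G := G)).toMonoidHom P.1) = Nat.card P.1 :=
        (Nat.card_congr (Subgroup.equivMapOfInjective P.1 (ConjAct.toConjAct (G := G)).toMonoidHom
          ConjAct.toConjAct.injective).toEquiv).symm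
      exact hcards ▸ Subgroup.card_dvd_of_le hPstab
    have h4 : p * N ∣ Nat.card G := by
      have : p * N ∣ S.card * Nat.card stab := mul_dvd_mul hdvd (hN ▸ h3)
      rw [← h1] at this
      rw [h2] at this
      exact this.trans (dvd_of_eq (Nat.card_congr ConjAct.ofConjAct.toEquiv))
    have h5 : p ^ ((Nat.card G).factorization p + 1) ∣ Nat.card G := by
      rw [pow_succ, mul_comm, ← hNpow]
      exact h4
    exact Nat.pow_succ_factorization_not_dvd Nat.card_pos.ne' hp h5
  exact hpS' hpS
end

section
/- Let p be a prime, a ≥ 2, and h ∈ ℤ[X] a polynomial with deg(X²h(X)) ≤ p^(a-1) (and h ≠ 0 allowed). Then X²·Φ_{p^a}(X)·h(X) has no monomial of the form X^(kp^(a-1)+1) for any integer k ≥ 0, where Φ_{p^a}(X) = Σ_{i=0}^{p-1} X^(i·p^(a-1)). -/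
open Polynomial

/-- for `a ≥ 2` and `h ∈ ℤ[X]` with `deg(X²h) ≤ p^(a-1)`, the
polynomial `X²·Φ_{p^a}·h` has no monomial `X^(k·p^(a-1)+1)`. -/
theorem stmt13 (p : ℕ) (hp : p.Prime) (a : ℕ) (ha : 2 ≤ a) (h : ℤ[X])
    (hdeg : 2 + h.natDegree ≤ p ^ (a - 1)) :
    ∀ k : ℕ,
      ((X : ℤ[X]) ^ 2 * (∑ i ∈ Finset.range p, (X : ℤ[X]) ^ (i * p ^ (a - 1))) * h).coeff
        (k * p ^ (a - 1) + 1) = 0 := by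
  intro k
  set q := p ^ (a - 1) with hqdef
  have hq2 : 2 ≤ q := le_trans (by omega) hdeg
  have heq : (X : ℤ[X]) ^ 2 * (∑ i ∈ Finset.range p, (X : ℤ[X]) ^ (i * q)) * h
      = ∑ i ∈ Finset.range p, h * X ^ (i * q + 2) := by
    rw [Finset.mul_sum, Finset.sum_mul]
    refine Finset.sum_congr rfl fun i _ => ?_
    rw [pow_add]; ring
  rw [heq, finset_sum_coeff]
  refine Finset.sum_eq_zero fun i _ => ?_
  rw [coeff_mul_X_pow']
  split_ifs with hle
  · apply coeff_eq_zero_of_natDegree_lt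
    have hik : i < k := by
      by_contra hik
      push_neg at hik
      have : k * q ≤ i * q := Nat.mul_le_mul_right q hik
      omega
    have hm : k * q = i * q + (k - i) * q := by
      rw [← Nat.add_mul, Nat.add_sub_cancel' hik.le]
    have hq' : q ≤ (k - i) * q := Nat.le_mul_of_pos_left q (by omega)
    omega
  · rfl
end
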